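/- arXiv:1903.10562 — 11 statements merged into one kernel-verified Lean document; each statement's English description precedes it below -/
import Mathlib

section
/- For every natural number n and every real number h ≥ 0, there exists a unique real number α that is an n-th Robin parameter for h; that is, there is exactly one α with nπ ≤ α < (n+1)π satisfying α·sin(α/2) = hπ·cos(α/2) if n is even, and α·cos(α/2) = −hπ·sin(α/2) if n is odd. -/
open Real

/-- `α` is an `n`-th Robin parameter for `h`: `nπ ≤ α < (n+1)π` and `α` satisfies
`α·sin(α/2) = hπ·cos(α/2)` if `n` is even, `α·cos(α/2) = −hπ·sin(α/2)` if `n` is odd. -/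
def IsRobinParam (n : ℕ) (h α : ℝ) : Prop :=
  (n : ℝ) * π ≤ α ∧ α < ((n : ℝ) + 1) * π ∧
    (if Even n then α * Real.sin (α / 2) = h * π * Real.cos (α / 2)
     else α * Real.cos (α / 2) = -(h * π) * Real.sin (α / 2))

/-- The key reformulation: the trig condition is equivalent to
`α·sin t = hπ·cos t` with `t = (α - nπ)/2`. -/
lemma robin_iff (n : ℕ) (h α : ℝ) :
    (if Even n then α * Real.sin (α / 2) = h * π * Real.cos (α / 2)
     else α * Real.cos (α / 2) = -(h * π) * Real.sin (α / 2)) ↔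
    α * Real.sin ((α - n * π) / 2) = h * π * Real.cos ((α - n * π) / 2) := by
  set t : ℝ := (α - n * π) / 2 with ht
  rcases Nat.even_or_odd n with ⟨m, hm⟩ | ⟨m, hm⟩
  · have hn : Even n := ⟨m, hm⟩
    have h2 : α / 2 = t + (m : ℤ) * π := by
      push_cast [ht, hm]; ring
    rw [if_pos hn, h2, Real.sin_add_int_mul_pi, Real.cos_add_int_mul_pi, zpow_natCast]
    rcases Nat.even_or_odd m with he | ho
    · rw [he.neg_one_pow]
      constructor <;> intro e <;> linear_combination e
    · rw [ho.neg_one_pow]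
      constructor <;> intro e <;> linear_combination -e
  · have hn : ¬ Even n := by simp [hm, parity_simps]
    have h2 : α / 2 = (t + π / 2) + (m : ℤ) * π := by
      push_cast [ht, hm]; ring
    rw [if_neg hn, h2, Real.sin_add_int_mul_pi, Real.cos_add_int_mul_pi,
      Real.sin_add_pi_div_two, Real.cos_add_pi_div_two, zpow_natCast]
    rcases Nat.even_or_odd m with he | ho
    · rw [he.neg_one_pow]
      constructor <;> intro e <;> linear_combination -e
    · rw [ho.neg_one_pow]
      constructor <;> intro e <;> linear_combination e

theorem stmt_1 (n : ℕ) (h : ℝ) (hh : 0 ≤ h) : ∃! α : ℝ, IsRobinParam n h α := by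
  have hπ := Real.pi_pos
  set c : ℝ := n * π with hc
  set d : ℝ := ((n : ℝ) + 1) * π with hd
  have hcd : c < d := by
    rw [hc, hd]; nlinarith
  have hc0 : 0 ≤ c := by positivity
  set f : ℝ → ℝ := fun α => α * Real.sin ((α - c) / 2) - h * π * Real.cos ((α - c) / 2)
    with hf
  -- strict monotonicity of f on [c, d]
  have hmono : StrictMonoOn f (Set.Icc c d) := by
    intro a ha b hb hab
    have hta : (0 : ℝ) ≤ (a - c) / 2 := by
      have := ha.1; linarith
    have htb : (b - c) / 2 ≤ π / 2 := by
      have := hb.2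
      have : b ≤ c + π := by rw [hc, hd] at *; nlinarith [hb.2]
      linarith
    have htab : (a - c) / 2 < (b - c) / 2 := by linarith
    have hsin : Real.sin ((a - c) / 2) < Real.sin ((b - c) / 2) :=
      Real.strictMonoOn_sin ⟨by linarith [Real.pi_pos], by linarith⟩
        ⟨by linarith [Real.pi_pos], htb⟩ htab
    have hsinb : 0 < Real.sin ((b - c) / 2) :=
      Real.sin_pos_of_pos_of_lt_pi (by linarith) (by linarith)
    have hcos : Real.cos ((b - c) / 2) ≤ Real.cos ((a - c) / 2) :=
      Real.cos_le_cos_of_nonneg_of_le_pi hta (by linarith) (le_of_lt htab)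
    have ha0 : 0 ≤ a := le_trans hc0 ha.1
    have h1 : a * Real.sin ((a - c) / 2) < b * Real.sin ((b - c) / 2) := by
      calc a * Real.sin ((a - c) / 2) ≤ a * Real.sin ((b - c) / 2) := by
            exact mul_le_mul_of_nonneg_left (le_of_lt hsin) ha0
        _ < b * Real.sin ((b - c) / 2) := by
            exact mul_lt_mul_of_pos_right hab hsinb
    have h2 : h * π * Real.cos ((b - c) / 2) ≤ h * π * Real.cos ((a - c) / 2) :=
      mul_le_mul_of_nonneg_left hcos (by positivity)
    simp only [hf]
    linarith
  -- continuity
  have hcont : ContinuousOn f (Set.Icc c d) := by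
    apply Continuous.continuousOn
    fun_prop
  -- endpoint values
  have hfc : f c = -(h * π) := by
    simp [hf]
  have hfd : f d = d := by
    have : (d - c) / 2 = π / 2 := by rw [hc, hd]; ring
    simp [hf, this]
  have hfc0 : f c ≤ 0 := by
    rw [hfc]
    have : 0 ≤ h * π := by positivity
    linarith
  have hfd0 : 0 < f d := by rw [hfd, hd]; positivity
  -- existence via IVT
  obtain ⟨α, hαmem, hα0⟩ : ∃ α ∈ Set.Icc c d, f α = 0 := by
    have := intermediate_value_Icc (le_of_lt hcd) hcont
    have h0 : (0 : ℝ) ∈ Set.Icc (f c) (f d) := ⟨hfc0, le_of_lt hfd0⟩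
    obtain ⟨α, hα, hαf⟩ := this h0
    exact ⟨α, hα, hαf⟩
  have hαd : α < d := by
    rcases lt_or_eq_of_le hαmem.2 with hlt | heq
    · exact hlt
    · exfalso; rw [heq] at hα0; linarith
  refine ⟨α, ⟨hαmem.1, hαd, ?_⟩, ?_⟩
  · rw [robin_iff]
    have : f α = 0 := hα0
    simp only [hf] at this
    rw [← hc]
    linarith
  · rintro β ⟨hβ1, hβ2, hβ3⟩
    rw [robin_iff] at hβ3
    have hβf : f β = 0 := by
      simp only [hf]
      rw [hc] at *
      linarith
    exact hmono.injOn ⟨hβ1, le_of_lt hβ2⟩ ⟨hαmem.1, le_of_lt hαd⟩ (by rw [hβf, hα0])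
end

section
/- Let n be a natural number and let 0 ≤ h₁ < h₂ be real numbers. If α₁ is an n-th Robin parameter for h₁ and α₂ is an n-th Robin parameter for h₂, then α₁ < α₂. In particular, every n-th Robin parameter for h ≥ 0 satisfies α ≥ nπ. -/
open Real

lemma robin_key (n : ℕ) (h α : ℝ) (hr : IsRobinParam n h α) :
    ∃ s : ℝ, 2 * s = α - n * π ∧ 0 ≤ s ∧ s < π / 2 ∧
      α * Real.sin s = h * π * Real.cos s := by
  obtain ⟨h1, h2, h3⟩ := hr
  refine ⟨α / 2 - n * π / 2, by ring, by linarith, by linarith, ?_⟩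
  set s : ℝ := α / 2 - n * π / 2 with hs
  rcases Nat.even_or_odd n with he | ho
  · rw [if_pos he] at h3
    obtain ⟨m, hm⟩ := he
    have hα : α / 2 = s + (m : ℤ) * π := by
      rw [hs, hm]; push_cast; ring
    rw [hα, Real.sin_add_int_mul_pi, Real.cos_add_int_mul_pi] at h3
    have hne : ((-1 : ℝ)) ^ (m : ℤ) ≠ 0 := zpow_ne_zero _ (by norm_num)
    have h4 : ((-1 : ℝ)) ^ (m : ℤ) * (α * Real.sin s)
        = ((-1 : ℝ)) ^ (m : ℤ) * (h * π * Real.cos s) := by linear_combination h3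
    exact mul_left_cancel₀ hne h4
  · rw [if_neg (Nat.not_even_iff_odd.mpr ho)] at h3
    obtain ⟨m, hm⟩ := ho
    have hα : α / 2 = (s + π / 2) + (m : ℤ) * π := by
      rw [hs, hm]; push_cast; ring
    rw [hα, Real.sin_add_int_mul_pi, Real.cos_add_int_mul_pi,
      Real.sin_add_pi_div_two, Real.cos_add_pi_div_two] at h3
    have hne : ((-1 : ℝ)) ^ (m : ℤ) ≠ 0 := zpow_ne_zero _ (by norm_num)
    have h4 : ((-1 : ℝ)) ^ (m : ℤ) * (α * Real.sin s)
        = ((-1 : ℝ)) ^ (m : ℤ) * (h * π * Real.cos s) := by linear_combination -h3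
    exact mul_left_cancel₀ hne h4

theorem stmt_3 (n : ℕ) :
    (∀ h₁ h₂ α₁ α₂ : ℝ, 0 ≤ h₁ → h₁ < h₂ →
      IsRobinParam n h₁ α₁ → IsRobinParam n h₂ α₂ → α₁ < α₂) ∧
    (∀ h α : ℝ, 0 ≤ h → IsRobinParam n h α → (n : ℝ) * π ≤ α) := by
  constructor
  · intro h₁ h₂ α₁ α₂ hh1 hh12 hr1 hr2
    obtain ⟨s₁, hs1e, hs1a, hs1b, he1⟩ := robin_key n h₁ α₁ hr1
    obtain ⟨s₂, hs2e, hs2a, hs2b, he2⟩ := robin_key n h₂ α₂ hr2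
    by_contra hle
    push_neg at hle
    have hpi := pi_pos
    have hss : s₂ ≤ s₁ := by linarith
    have hα₂0 : 0 ≤ α₂ := le_trans (by positivity) hr2.1
    have hα₁0 : 0 ≤ α₁ := le_trans hα₂0 hle
    have hsin : Real.sin s₂ ≤ Real.sin s₁ :=
      Real.strictMonoOn_sin.monotoneOn ⟨by linarith, by linarith⟩
        ⟨by linarith, by linarith⟩ hss
    have hcos : Real.cos s₁ ≤ Real.cos s₂ :=
      Real.strictAntiOn_cos.antitoneOn ⟨by linarith, by linarith⟩
        ⟨by linarith, by linarith⟩ hss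
    have hsin2 : 0 ≤ Real.sin s₂ := Real.sin_nonneg_of_nonneg_of_le_pi hs2a (by linarith)
    have hcos2 : 0 < Real.cos s₂ := Real.cos_pos_of_mem_Ioo ⟨by linarith, hs2b⟩
    have key : α₂ * Real.sin s₂ ≤ α₁ * Real.sin s₁ :=
      mul_le_mul hle hsin hsin2 hα₁0
    rw [he1, he2] at key
    have hc1 : h₁ * π * Real.cos s₁ ≤ h₁ * π * Real.cos s₂ := by
      apply mul_le_mul_of_nonneg_left hcos
      positivity
    have hfin : h₂ * π * Real.cos s₂ ≤ h₁ * π * Real.cos s₂ := le_trans key hc1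
    nlinarith [mul_pos (sub_pos.mpr hh12) (mul_pos hpi hcos2)]
  · intro h α _ hr
    exact hr.1
end

section
/- Let p ≤ q and p' ≤ q' be natural numbers with (p,q) ≠ (p',q'). Let a_p, a_q, a_{p'}, a_{q'} : ℝ → ℝ be functions such that for every h ≥ 0 and each n ∈ {p, q, p', q'}, the value a_n(h) is an n-th Robin parameter for h. Then there is at most one h ∈ [0, ∞) such that a_p(h)² + a_q(h)² = a_{p'}(h)² + a_{q'}(h)², i.e. the set {h ≥ 0 : a_p(h)² + a_q(h)² = a_{p'}(h)² + a_{q'}(h)²} is a subsingleton. -/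
/-!
A branch `a_n` is the inverse of `α ↦ α tan ((α - nπ) / 2) / π` on `[nπ, (n + 1)π)`, so
`u = a_n²` solves `u' = 4πu / (u + c h)` with `c h = 2πh + (πh)²`, whose right-hand side is
increasing and strictly concave in `u`. Two pairs can only cross when their squares can be
ordered as `x < X ≤ Y < y`; then at a crossing `x + y = X + Y` the pair `(x, y)` is more spread
out than `(X, Y)`, so `D = x + y - X - Y` is strictly decreasing through each of its zeros, and
such a function vanishes at most once. At `h = 0`, where `c` vanishes and `D` need not be
differentiable, the sign information is carried by a continuous "crossing weight" instead.
-/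

open Real

open Set

section Zeros

variable {D D' Ψ : ℝ → ℝ} {a : ℝ}

lemma exists_strictAntiOn_of_pos (hD : ContinuousOn D (Ici a)) (hΨ : ContinuousOn Ψ (Ici a))
    (hD' : ∀ h, a < h → HasDerivAt D (D' h) h) (hneg : ∀ h, a < h → 0 < Ψ h → D' h < 0)
    {t : ℝ} (ht : a ≤ t) (hΨt : 0 < Ψ t) :
    ∃ δ > 0, StrictAntiOn D (Icc (max (t - δ) a) (t + δ)) := by
  obtain ⟨ε, hε, hball⟩ := Metric.mem_nhdsWithin_iff.mp ((hΨ t ht).eventually (lt_mem_nhds hΨt))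
  refine ⟨ε / 2, half_pos hε, strictAntiOn_of_deriv_neg (convex_Icc _ _)
    (hD.mono fun z hz => le_trans (le_max_right _ _) hz.1) fun z hz => ?_⟩
  rw [interior_Icc] at hz
  obtain ⟨hz₁, hz₂⟩ := hz
  have haz : a < z := (le_max_right _ _).trans_lt hz₁
  have hzt : dist z t < ε := by
    rw [Real.dist_eq, abs_lt]
    constructor <;> linarith [le_max_left (t - ε / 2) a]
  rw [(hD' z haz).deriv]
  exact hneg z haz (hball ⟨hzt, haz.le⟩)

lemma subsingleton_setOf_eq_zero (hD : ContinuousOn D (Ici a)) (hΨ : ContinuousOn Ψ (Ici a))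
    (hD' : ∀ h, a < h → HasDerivAt D (D' h) h) (hneg : ∀ h, a < h → 0 < Ψ h → D' h < 0)
    (hzero : ∀ h, a ≤ h → D h = 0 → 0 < Ψ h) :
    {h | a ≤ h ∧ D h = 0}.Subsingleton := by
  intro t₁ h₁ t₂ h₂
  by_contra hne
  wlog h₁₂ : t₁ < t₂ generalizing t₁ t₂
  · exact this h₂ h₁ (Ne.symm hne) ((not_lt.1 h₁₂).lt_of_ne' hne)
  obtain ⟨ht₁, hD₁⟩ := h₁
  obtain ⟨ht₂, hD₂⟩ := h₂
  obtain ⟨δ₁, hδ₁, hanti₁⟩ := exists_strictAntiOn_of_pos hD hΨ hD' hneg ht₁ (hzero t₁ ht₁ hD₁)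
  obtain ⟨δ₂, hδ₂, hanti₂⟩ := exists_strictAntiOn_of_pos hD hΨ hD' hneg ht₂ (hzero t₂ ht₂ hD₂)
  -- `D` drops below zero right after `t₁` ...
  set s := min (t₁ + δ₁) ((t₁ + t₂) / 2)
  have hs₁ : t₁ < s := lt_min (by linarith) (by linarith)
  have hs₂ : s < t₂ := (min_le_right _ _).trans_lt (by linarith)
  have hDs : D s < 0 := hD₁ ▸ hanti₁ ⟨(max_le (by linarith) ht₁), by linarith⟩
    ⟨(max_le (by linarith) ht₁).trans hs₁.le, min_le_left _ _⟩ hs₁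
  -- ... cannot come back to zero before `t₂`, since it decreases at every zero ...
  have hfence : ∀ z ∈ Icc s t₂, D z ≤ 0 := by
    have has : ∀ z ∈ Ico s t₂, a < z := fun z hz => ht₁.trans_lt (hs₁.trans_le hz.1)
    refine image_le_of_deriv_right_lt_deriv_boundary (B := fun _ => 0) (B' := fun _ => 0)
      (hD.mono fun z hz => (ht₁.trans hs₁.le).trans hz.1)
      (fun z hz => (hD' z (has z hz)).hasDerivWithinAt) hDs.le (fun _ => hasDerivAt_const _ _)
      fun z hz hDz => hneg z (has z hz) (hzero z (has z hz).le hDz)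
  -- ... but it is positive right before `t₂`.
  set r := max (t₂ - δ₂) s
  have hr₂ : r < t₂ := max_lt (by linarith) hs₂
  have hr : r ∈ Icc (max (t₂ - δ₂) a) (t₂ + δ₂) :=
    ⟨max_le_max le_rfl (ht₁.trans hs₁.le), by linarith⟩
  have hDr : 0 < D r := hD₂ ▸ hanti₂ hr ⟨max_le (by linarith) ht₂, by linarith⟩ hr₂
  exact (hfence r ⟨le_max_right _ _, hr₂.le⟩).not_gt hDr

end Zeros

/-- Up to the factor `k c / ((x + c) (X + c) (Y + c) (y + c))`, this is `-(x + y - X - Y)'`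
for solutions of `u' = k u / (u + c)`; unlike that derivative it stays continuous where
`x + c` vanishes. -/
def crossingWeight (c x X Y y : ℝ) : ℝ :=
  (X - x) * (Y + c) * (y + c) - (y - Y) * (x + c) * (X + c)

section CrossingWeight

variable {c x X Y y : ℝ}

lemma crossingWeight_pos (hc : 0 ≤ c) (hx : 0 ≤ x) (hxX : x < X) (hXY : X ≤ Y) (hYy : Y < y)
    (hsum : x + y = X + Y) : 0 < crossingWeight c x X Y y := by
  have hprod : (x + c) * (X + c) < (Y + c) * (y + c) := by nlinarith
  have hgap : y - Y = X - x := by linarith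
  unfold crossingWeight
  rw [hgap]
  nlinarith

lemma add_div_add_lt_of_crossingWeight_pos (hc : 0 < c) (hx : 0 ≤ x) (hX : 0 ≤ X) (hY : 0 ≤ Y)
    (hy : 0 ≤ y) (hw : 0 < crossingWeight c x X Y y) :
    x / (x + c) + y / (y + c) < X / (X + c) + Y / (Y + c) := by
  unfold crossingWeight at hw
  rw [div_add_div _ _ (by positivity) (by positivity),
    div_add_div _ _ (by positivity) (by positivity),
    div_lt_div_iff₀ (by positivity) (by positivity)]
  nlinarith [mul_pos hc hw]

end CrossingWeight

section Crossing

variable {k : ℝ} {c x X Y y : ℝ → ℝ}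

theorem subsingleton_setOf_add_eq_add (hk : 0 < k) (hc : ContinuousOn c (Ici 0))
    (hc_nonneg : ∀ h, 0 ≤ h → 0 ≤ c h) (hc_pos : ∀ h, 0 < h → 0 < c h)
    (hcont : ∀ u ∈ ({x, X, Y, y} : Set (ℝ → ℝ)), ContinuousOn u (Ici 0))
    (hderiv : ∀ u ∈ ({x, X, Y, y} : Set (ℝ → ℝ)), ∀ h, 0 < h →
      HasDerivAt u (k * u h / (u h + c h)) h)
    (hord : ∀ h, 0 ≤ h → 0 ≤ x h ∧ x h < X h ∧ X h ≤ Y h ∧ Y h < y h) :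
    {h | 0 ≤ h ∧ x h + y h = X h + Y h}.Subsingleton := by
  have hx := hcont x (by simp)
  have hX := hcont X (by simp)
  have hY := hcont Y (by simp)
  have hy := hcont y (by simp)
  have key := subsingleton_setOf_eq_zero (a := 0) (D := fun h => x h + y h - (X h + Y h))
    (Ψ := fun h => crossingWeight (c h) (x h) (X h) (Y h) (y h))
    (D' := fun h => k * (x h / (x h + c h) + y h / (y h + c h)
      - (X h / (X h + c h) + Y h / (Y h + c h))))
    ((hx.add hy).sub (hX.add hY))
    (by unfold crossingWeight; fun_prop)
    (fun h hh => by
      refine (((hderiv x (by simp) h hh).add (hderiv y (by simp) h hh)).sub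
        ((hderiv X (by simp) h hh).add (hderiv Y (by simp) h hh))).congr_deriv ?_
      simp only [mul_div_assoc]
      ring)
    (fun h hh hw => by
      obtain ⟨hx₀, hxX, hXY, hYy⟩ := hord h hh.le
      exact mul_neg_of_pos_of_neg hk <| sub_neg.2 <| add_div_add_lt_of_crossingWeight_pos
        (hc_pos h hh) hx₀ (by linarith) (by linarith) (by linarith) hw)
    (fun h hh hD => by
      obtain ⟨hx₀, hxX, hXY, hYy⟩ := hord h hh
      exact crossingWeight_pos (hc_nonneg h hh) hx₀ hxX hXY hYy (sub_eq_zero.1 hD))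
  simpa only [sub_eq_zero] using key

end Crossing

noncomputable def robinFun (n : ℕ) (α : ℝ) : ℝ := α * tan ((α - n * π) / 2)

section RobinFun

variable {n : ℕ} {α : ℝ}

lemma robinFun_arg_mem_Ico (hα : α ∈ Ico (n * π) ((n + 1) * π)) :
    (α - n * π) / 2 ∈ Ico 0 (π / 2) :=
  ⟨by linarith [hα.1], by linarith [hα.2]⟩

lemma robinFun_nonneg (hα : α ∈ Ico (n * π) ((n + 1) * π)) : 0 ≤ robinFun n α := by
  obtain ⟨hβ₀, hβ⟩ := robinFun_arg_mem_Ico hα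
  exact mul_nonneg ((by positivity : (0 : ℝ) ≤ n * π).trans hα.1)
    (tan_nonneg_of_nonneg_of_le_pi_div_two hβ₀ hβ.le)

lemma strictMonoOn_robinFun (n : ℕ) : StrictMonoOn (robinFun n) (Ico (n * π) ((n + 1) * π)) := by
  intro α hα β hβ hαβ
  obtain ⟨hα₀, -⟩ := robinFun_arg_mem_Ico hα
  obtain ⟨-, hβ₁⟩ := robinFun_arg_mem_Ico hβ
  have htan : tan ((α - n * π) / 2) < tan ((β - n * π) / 2) :=
    tan_lt_tan_of_nonneg_of_lt_pi_div_two hα₀ hβ₁ (by linarith)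
  calc α * tan ((α - n * π) / 2) ≤ α * tan ((β - n * π) / 2) :=
        mul_le_mul_of_nonneg_left htan.le ((by positivity : (0 : ℝ) ≤ n * π).trans hα.1)
    _ < β * tan ((β - n * π) / 2) := mul_lt_mul_of_pos_right hαβ
        ((tan_nonneg_of_nonneg_of_le_pi_div_two hα₀ (by linarith)).trans_lt htan)

end RobinFun

namespace IsRobinParam

variable {n : ℕ} {h α : ℝ}

lemma mem_Ico (H : IsRobinParam n h α) : α ∈ Ico (n * π) ((n + 1) * π) := ⟨H.1, H.2.1⟩

lemma nonneg (H : IsRobinParam n h α) : 0 ≤ α :=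
  (by positivity : (0 : ℝ) ≤ n * π).trans H.1

/-- Shifting by `nπ` turns both parity cases of the defining equation into one. -/
lemma mul_sin_eq (H : IsRobinParam n h α) :
    α * sin ((α - n * π) / 2) = h * π * cos ((α - n * π) / 2) := by
  obtain ⟨-, -, hεq⟩ := H
  set β := (α - n * π) / 2
  rcases Nat.even_or_odd n with ⟨k, hk⟩ | ⟨k, hk⟩
  · rw [if_pos ⟨k, hk⟩, show α / 2 = β + (k : ℤ) * π by simp only [β, hk]; push_cast; ring,
      sin_add_int_mul_pi, cos_add_int_mul_pi] at hεq
    exact mul_left_cancel₀ (zpow_ne_zero k (by norm_num : (-1 : ℝ) ≠ 0))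
      (by linear_combination hεq)
  · rw [if_neg (Nat.not_even_iff_odd.mpr ⟨k, hk⟩),
      show α / 2 = β + π / 2 + (k : ℤ) * π by simp only [β, hk]; push_cast; ring,
      sin_add_int_mul_pi, cos_add_int_mul_pi, sin_add_pi_div_two, cos_add_pi_div_two] at hεq
    exact mul_left_cancel₀ (zpow_ne_zero k (by norm_num : (-1 : ℝ) ≠ 0))
      (by linear_combination -hεq)

lemma robinFun_eq (H : IsRobinParam n h α) : robinFun n α = h * π := by
  have hcos : cos ((α - n * π) / 2) ≠ 0 := by
    obtain ⟨hβ₀, hβ⟩ := robinFun_arg_mem_Ico H.mem_Ico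
    exact (cos_pos_of_mem_Ioo ⟨by linarith [pi_pos], hβ⟩).ne'
  rw [robinFun, tan_eq_sin_div_cos, mul_div_assoc', div_eq_iff hcos, H.mul_sin_eq]

lemma unique (H : IsRobinParam n h α) {β : ℝ} (H' : IsRobinParam n h β) : α = β :=
  (strictMonoOn_robinFun n).injOn H.mem_Ico H'.mem_Ico (H.robinFun_eq.trans H'.robinFun_eq.symm)

lemma lt_of_lt {m : ℕ} {β : ℝ} (H : IsRobinParam n h α) (H' : IsRobinParam m h β) (hnm : n < m) :
    α < β := by
  have hnm' : (n : ℝ) + 1 ≤ m := by exact_mod_cast hnm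
  nlinarith [H.2.1, H'.1, pi_pos]

lemma sq_lt_sq {m : ℕ} {β : ℝ} (H : IsRobinParam n h α) (H' : IsRobinParam m h β)
    (hnm : n < m) : α ^ 2 < β ^ 2 :=
  pow_lt_pow_left₀ (H.lt_of_lt H' hnm) H.nonneg two_ne_zero

lemma sq_le_sq {m : ℕ} {β : ℝ} (H : IsRobinParam n h α) (H' : IsRobinParam m h β)
    (hnm : n ≤ m) : α ^ 2 ≤ β ^ 2 := by
  rcases hnm.lt_or_eq with hnm | rfl
  exacts [(H.sq_lt_sq H' hnm).le, by rw [H.unique H']]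

lemma sq_add_sq_lt {p q p' q' : ℕ} {β α' β' : ℝ} (hp : p ≤ p') (hq : q ≤ q')
    (hne : (p, q) ≠ (p', q')) (Hp : IsRobinParam p h α) (Hq : IsRobinParam q h β)
    (Hp' : IsRobinParam p' h α') (Hq' : IsRobinParam q' h β') :
    α ^ 2 + β ^ 2 < α' ^ 2 + β' ^ 2 := by
  rcases hp.lt_or_eq with hp | rfl
  · linarith [Hp.sq_lt_sq Hp' hp, Hq.sq_le_sq Hq' hq]
  · have hq : q < q' := hq.lt_of_ne fun hqq => hne (by rw [hqq])
    rw [Hp.unique Hp']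
    linarith [Hq.sq_lt_sq Hq' hq]

lemma mem_Ioo (H : IsRobinParam n h α) (hh : 0 < h) : α ∈ Ioo (n * π) ((n + 1) * π) := by
  refine ⟨H.1.lt_of_ne fun hα => ?_, H.2.1⟩
  have := H.robinFun_eq
  rw [← hα, robinFun, sub_self, zero_div, tan_zero, mul_zero] at this
  nlinarith [pi_pos]

lemma hasDerivAt_robinFun (H : IsRobinParam n h α) (hh : 0 < h) :
    HasDerivAt (robinFun n) ((α ^ 2 + 2 * π * h + (π * h) ^ 2) / (2 * α)) α := by
  set β := (α - n * π) / 2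
  have hα : 0 < α := (by positivity : (0 : ℝ) ≤ n * π).trans_lt (H.mem_Ioo hh).1
  have hcos : cos β ≠ 0 := by
    obtain ⟨hβ₀, hβ⟩ := robinFun_arg_mem_Ico H.mem_Ico
    exact (cos_pos_of_mem_Ioo ⟨by linarith [pi_pos], hβ⟩).ne'
  have htan : tan β = h * π / α := by
    rw [eq_div_iff hα.ne', mul_comm]; exact H.robinFun_eq
  have hβ' : HasDerivAt (fun x : ℝ => (x - n * π) / 2) (1 / 2) α := by
    simpa using ((hasDerivAt_id α).sub_const ((n : ℝ) * π)).div_const 2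
  refine ((hasDerivAt_id α).mul ((hasDerivAt_tan hcos).comp α hβ')).congr_deriv ?_
  change 1 * tan β + α * (1 / cos β ^ 2 * (1 / 2)) = _
  rw [one_div (cos β ^ 2), ← inv_one_add_tan_sq hcos, inv_inv, htan]
  field_simp
  ring

end IsRobinParam

def IsRobinBranch (n : ℕ) (a : ℝ → ℝ) : Prop := ∀ h, 0 ≤ h → IsRobinParam n h (a h)

namespace IsRobinBranch

variable {n : ℕ} {a : ℝ → ℝ}

lemma strictMonoOn (ha : IsRobinBranch n a) : StrictMonoOn a (Ici 0) := by
  intro s hs t ht hst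
  refine ((strictMonoOn_robinFun n).lt_iff_lt (ha s hs).mem_Ico (ha t ht).mem_Ico).mp ?_
  rw [(ha s hs).robinFun_eq, (ha t ht).robinFun_eq]
  exact mul_lt_mul_of_pos_right hst pi_pos

lemma image_Ici (ha : IsRobinBranch n a) : a '' Ici 0 = Ico (n * π) ((n + 1) * π) := by
  refine Subset.antisymm (image_subset_iff.mpr fun h hh => (ha h hh).mem_Ico) fun α hα => ?_
  have hh : 0 ≤ robinFun n α / π := div_nonneg (robinFun_nonneg hα) pi_pos.le
  refine ⟨robinFun n α / π, hh, (strictMonoOn_robinFun n).injOn (ha _ hh).mem_Ico hα ?_⟩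
  rw [(ha _ hh).robinFun_eq, div_mul_cancel₀ _ pi_ne_zero]

lemma continuousOn (ha : IsRobinBranch n a) : ContinuousOn a (Ici 0) := by
  intro h hh
  rcases (show (0 : ℝ) ≤ h from hh).eq_or_lt with rfl | hpos
  · refine continuousWithinAt_right_of_monotoneOn_of_image_mem_nhdsWithin
      ha.strictMonoOn.monotoneOn self_mem_nhdsWithin ?_
    rw [ha.image_Ici]
    exact Ico_mem_nhdsGE_of_mem ⟨(ha 0 le_rfl).1, (ha 0 le_rfl).2.1⟩
  · refine (continuousAt_of_monotoneOn_of_image_mem_nhds ha.strictMonoOn.monotoneOn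
      (Ici_mem_nhds hpos) ?_).continuousWithinAt
    rw [ha.image_Ici]
    exact Ico_mem_nhds ((ha h hh).mem_Ioo hpos).1 (ha h hh).2.1

lemma hasDerivAt_sq (ha : IsRobinBranch n a) {h : ℝ} (hh : 0 < h) :
    HasDerivAt (fun t => a t ^ 2)
      (4 * π * a h ^ 2 / (a h ^ 2 + (2 * π * h + (π * h) ^ 2))) h := by
  have H := ha h hh.le
  have hα : 0 < a h := (by positivity : (0 : ℝ) ≤ n * π).trans_lt (H.mem_Ioo hh).1
  have hinv := HasDerivAt.of_local_left_inverse (ha.continuousOn.continuousAt (Ici_mem_nhds hh))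
    ((H.hasDerivAt_robinFun hh).div_const π) (by positivity) <| by
      filter_upwards [Ici_mem_nhds hh] with t ht
      rw [(ha t ht).robinFun_eq, mul_div_cancel_right₀ _ pi_ne_zero]
  refine (hinv.pow 2).congr_deriv ?_
  field_simp
  ring

end IsRobinBranch

lemma IsRobinBranch.subsingleton_setOf_sq_add_sq_eq {p p' q' q : ℕ} {ap ap' aq' aq : ℝ → ℝ}
    (hpp' : p < p') (hp'q' : p' ≤ q') (hq'q : q' < q) (hap : IsRobinBranch p ap)
    (hap' : IsRobinBranch p' ap') (haq' : IsRobinBranch q' aq') (haq : IsRobinBranch q aq) :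
    {h | 0 ≤ h ∧ ap h ^ 2 + aq h ^ 2 = ap' h ^ 2 + aq' h ^ 2}.Subsingleton := by
  have hbranch : ∀ u ∈ ({fun h => ap h ^ 2, fun h => ap' h ^ 2, fun h => aq' h ^ 2,
      fun h => aq h ^ 2} : Set (ℝ → ℝ)), ∃ n a, IsRobinBranch n a ∧ u = fun h => a h ^ 2 := by
    simp only [mem_insert_iff, mem_singleton_iff]
    rintro u (rfl | rfl | rfl | rfl)
    exacts [⟨p, ap, hap, rfl⟩, ⟨p', ap', hap', rfl⟩, ⟨q', aq', haq', rfl⟩, ⟨q, aq, haq, rfl⟩]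
  refine subsingleton_setOf_add_eq_add (k := 4 * π) (c := fun h => 2 * π * h + (π * h) ^ 2)
    (by positivity) (by fun_prop) (fun h hh => by positivity) (fun h hh => by positivity)
    (fun u hu => ?_) (fun u hu h hh => ?_) fun h hh =>
      ⟨sq_nonneg _, (hap h hh).sq_lt_sq (hap' h hh) hpp', (hap' h hh).sq_le_sq (haq' h hh) hp'q',
        (haq' h hh).sq_lt_sq (haq h hh) hq'q⟩
  · obtain ⟨n, a, ha, rfl⟩ := hbranch u hu
    exact ha.continuousOn.pow 2
  · obtain ⟨n, a, ha, rfl⟩ := hbranch u hu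
    exact ha.hasDerivAt_sq hh

theorem stmt_4 (p q p' q' : ℕ) (hpq : p ≤ q) (hpq' : p' ≤ q')
    (hne : (p, q) ≠ (p', q'))
    (ap aq ap' aq' : ℝ → ℝ)
    (hap : ∀ h : ℝ, 0 ≤ h → IsRobinParam p h (ap h))
    (haq : ∀ h : ℝ, 0 ≤ h → IsRobinParam q h (aq h))
    (hap' : ∀ h : ℝ, 0 ≤ h → IsRobinParam p' h (ap' h))
    (haq' : ∀ h : ℝ, 0 ≤ h → IsRobinParam q' h (aq' h)) :
    {h : ℝ | 0 ≤ h ∧ (ap h) ^ 2 + (aq h) ^ 2 = (ap' h) ^ 2 + (aq' h) ^ 2}.Subsingleton := by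
  have hcases : (p ≤ p' ∧ q ≤ q') ∨ (p' ≤ p ∧ q' ≤ q) ∨ (p < p' ∧ q' < q) ∨ (p' < p ∧ q < q') := by
    omega
  rcases hcases with ⟨hp, hq⟩ | ⟨hp, hq⟩ | ⟨hp, hq⟩ | ⟨hp, hq⟩
  · exact subsingleton_empty.anti fun h ⟨hh, heq⟩ => (IsRobinParam.sq_add_sq_lt hp hq hne
      (hap h hh) (haq h hh) (hap' h hh) (haq' h hh)).ne heq
  · exact subsingleton_empty.anti fun h ⟨hh, heq⟩ => (IsRobinParam.sq_add_sq_lt hp hq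
      (Ne.symm hne) (hap' h hh) (haq' h hh) (hap h hh) (haq h hh)).ne' heq
  · exact IsRobinBranch.subsingleton_setOf_sq_add_sq_eq hp hpq' hq hap hap' haq' haq
  · simpa only [eq_comm] using
      IsRobinBranch.subsingleton_setOf_sq_add_sq_eq hp hpq hq hap' hap haq haq'
end

section
/- For every real number λ > 0, the number N(λ) of pairs (i,j) of natural numbers (including 0) with i² + j² < λ satisfies πλ/4 < N(λ) ≤ πλ/4 + 2⌊√λ⌋ + 1. -/
/-!
Counting by columns, `N(λ) = ∑_{i ≤ ⌊√λ⌋} ⌈f i⌉` with `f x = √(λ - x²)`, a decreasing function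
with `∫₀^√λ f = πλ/4`. The lower bound comes from `⌈f i⌉ ≥ f i ≥ ∫_i^{i+1} f`, which is strict
for `i = 0` because `f` drops on `[0, 1]`. The upper bound comes from `⌈f i⌉ ≤ f i + 1` and
`f i ≤ ∫_{i-1}^i f` for `i ≥ 1`, together with `⌈f 0⌉ = ⌈√λ⌉ ≤ ⌊√λ⌋ + 1`.
-/

open Real Finset

theorem ncard_setOf_snd_lt_eq_sum {c : ℕ → ℕ} {n : ℕ} (hc : ∀ i, n ≤ i → c i = 0) :
    {p : ℕ × ℕ | p.2 < c p.1}.ncard = ∑ i ∈ range n, c i := by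
  have hset : {p : ℕ × ℕ | p.2 < c p.1} =
      ((range n).sigma fun i => range (c i)).image fun x => (x.1, x.2) := by
    ext ⟨i, j⟩
    simp only [Set.mem_ofPred_eq, coe_image, Set.mem_image, mem_coe, mem_sigma, mem_range,
      Prod.mk.injEq]
    constructor
    · intro hj
      exact ⟨⟨i, j⟩, ⟨not_le.1 fun hi => by simp [hc i hi] at hj, hj⟩, rfl, rfl⟩
    · rintro ⟨⟨i, j⟩, ⟨-, hj⟩, rfl, rfl⟩
      exact hj
  rw [hset, Set.ncard_coe_finset, card_image_of_injective _ fun x y h => ?_, card_sigma]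
  · simp
  · obtain ⟨i, j⟩ := x; obtain ⟨i', j'⟩ := y
    simp only [Prod.mk.injEq] at h
    obtain ⟨rfl, rfl⟩ := h
    rfl

-- No sign condition on `x`: for `x ≤ 0` both sides are false, as `√x = 0`.
theorem Nat.lt_ceil_sqrt_iff {x : ℝ} {j : ℕ} : j < ⌈√x⌉₊ ↔ (j : ℝ) ^ 2 < x := by
  rw [Nat.lt_ceil, Real.lt_sqrt j.cast_nonneg]

theorem integral_sqrt_one_sub_sq_zero_one : ∫ x in (0 : ℝ)..1, √(1 - x ^ 2) = π / 4 := by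
  have hcont : Continuous fun x : ℝ => √(1 - x ^ 2) := by fun_prop
  have hsymm := intervalIntegral.integral_comp_neg (a := (0 : ℝ)) (b := 1) fun x => √(1 - x ^ 2)
  simp only [neg_sq, neg_zero] at hsymm
  have := intervalIntegral.integral_add_adjacent_intervals (μ := MeasureTheory.volume)
    (hcont.intervalIntegrable (-1) 0) (hcont.intervalIntegrable 0 1)
  rw [integral_sqrt_one_sub_sq, ← hsymm] at this
  linarith

theorem integral_sqrt_sub_sq {lam : ℝ} (hlam : 0 ≤ lam) :
    ∫ x in (0 : ℝ)..√lam, √(lam - x ^ 2) = π * lam / 4 := by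
  have hscale : ∀ t : ℝ, √(lam - (√lam * t) ^ 2) = √lam * √(1 - t ^ 2) := fun t => by
    rw [mul_pow, sq_sqrt hlam, ← sqrt_mul hlam]; ring_nf
  have := intervalIntegral.smul_integral_comp_mul_left (a := 0) (b := 1)
    (fun x => √(lam - x ^ 2)) √lam
  simp only [hscale, intervalIntegral.integral_const_mul, integral_sqrt_one_sub_sq_zero_one,
    mul_zero, mul_one, smul_eq_mul] at this
  rw [← this, ← mul_assoc, mul_self_sqrt hlam]
  ring

theorem antitoneOn_sqrt_sub_sq (lam : ℝ) : AntitoneOn (fun x => √(lam - x ^ 2)) (Set.Ici 0) :=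
  fun x hx y _ hxy => sqrt_le_sqrt (by nlinarith [Set.mem_Ici.1 hx])

theorem AntitoneOn.integral_lt_sum {f : ℝ → ℝ} {x₀ : ℝ} {a : ℕ}
    (hf : AntitoneOn f (Set.Icc x₀ (x₀ + (a + 1 : ℕ))))
    (hcont : ContinuousOn f (Set.Icc x₀ (x₀ + 1))) (hlt : f (x₀ + 1) < f x₀) :
    ∫ x in x₀..x₀ + (a + 1 : ℕ), f x < ∑ i ∈ range (a + 1), f (x₀ + i) := by
  have ha : (0 : ℝ) ≤ a := a.cast_nonneg
  have hend : x₀ + (a + 1 : ℕ) = x₀ + 1 + a := by push_cast; ring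
  have hleft : x₀ ∈ Set.Icc x₀ (x₀ + (a + 1 : ℕ)) := ⟨le_rfl, by push_cast; linarith⟩
  have hmid : x₀ + 1 ∈ Set.Icc x₀ (x₀ + (a + 1 : ℕ)) := ⟨by linarith, by push_cast; linarith⟩
  have hright : x₀ + (a + 1 : ℕ) ∈ Set.Icc x₀ (x₀ + (a + 1 : ℕ)) := ⟨hleft.2, le_rfl⟩
  have hfirst : ∫ x in x₀..x₀ + 1, f x < ∫ _ in x₀..x₀ + 1, f x₀ :=
    intervalIntegral.integral_lt_integral_of_continuousOn_of_le_of_exists_lt (by linarith)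
      hcont continuousOn_const
      (fun x hx => hf hleft ⟨hx.1.le, hx.2.trans hmid.2⟩ hx.1.le)
      ⟨x₀ + 1, ⟨by linarith, le_rfl⟩, hlt⟩
  have hrest : ∫ x in x₀ + 1..x₀ + 1 + a, f x ≤ ∑ i ∈ range a, f (x₀ + 1 + i) :=
    (hf.mono (by rw [hend]; exact Set.Icc_subset_Icc (by linarith) le_rfl)).integral_le_sum
  have hsplit := intervalIntegral.integral_add_adjacent_intervals (μ := MeasureTheory.volume)
    (hf.mono (Set.uIcc_subset_Icc hleft hmid)).intervalIntegrable
    (hf.mono (Set.uIcc_subset_Icc hmid hright)).intervalIntegrable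
  rw [← hsplit, sum_range_succ', hend]
  simp only [intervalIntegral.integral_const, add_sub_cancel_left, one_smul] at hfirst
  push_cast
  simp only [add_zero, ← add_assoc, add_right_comm x₀ _ 1] at hrest ⊢
  linarith

theorem ncard_sq_add_sq_lt_eq_sum (lam : ℝ) :
    {p : ℕ × ℕ | (p.1 : ℝ) ^ 2 + (p.2 : ℝ) ^ 2 < lam}.ncard =
      ∑ i ∈ range (⌊√lam⌋₊ + 1), ⌈√(lam - (i : ℝ) ^ 2)⌉₊ := by
  rw [← ncard_setOf_snd_lt_eq_sum (c := fun i : ℕ => ⌈√(lam - (i : ℝ) ^ 2)⌉₊)]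
  · simp only [Nat.lt_ceil_sqrt_iff, lt_sub_iff_add_lt']
  · intro i hi
    have hi_pos : (0 : ℝ) < i := by exact_mod_cast Nat.one_pos.trans_le (by omega)
    have hlam : lam < (i : ℝ) ^ 2 := (sqrt_lt' hi_pos).1 (Nat.lt_of_floor_lt (by omega))
    simp only [Nat.ceil_eq_zero, sqrt_eq_zero'.2 (by linarith : lam - (i : ℝ) ^ 2 ≤ 0), le_refl]

theorem pi_mul_div_four_lt_sum_sqrt_sub_sq {lam : ℝ} (hlam : 0 < lam) :
    π * lam / 4 < ∑ i ∈ range (⌊√lam⌋₊ + 1), √(lam - (i : ℝ) ^ 2) := by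
  set f : ℝ → ℝ := fun x => √(lam - x ^ 2)
  have hcont : Continuous f := by fun_prop
  have hanti : AntitoneOn f (Set.Icc 0 (0 + (⌊√lam⌋₊ + 1 : ℕ))) :=
    (antitoneOn_sqrt_sub_sq lam).mono Set.Icc_subset_Ici_self
  have hdrop : f (0 + 1) < f 0 := by
    simpa [f] using (sqrt_lt_sqrt_iff_of_pos hlam).2 (by linarith : lam - 1 < lam)
  calc π * lam / 4 = ∫ x in (0 : ℝ)..√lam, f x := (integral_sqrt_sub_sq hlam.le).symm
    _ ≤ ∫ x in (0 : ℝ)..0 + (⌊√lam⌋₊ + 1 : ℕ), f x := by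
      refine intervalIntegral.integral_mono_interval le_rfl (sqrt_nonneg _) ?_
        (Filter.Eventually.of_forall fun x => sqrt_nonneg _) (hcont.intervalIntegrable _ _)
      push_cast
      linarith [Nat.lt_floor_add_one √lam]
    _ < ∑ i ∈ range (⌊√lam⌋₊ + 1), f (0 + i) :=
      hanti.integral_lt_sum hcont.continuousOn hdrop
    _ = ∑ i ∈ range (⌊√lam⌋₊ + 1), √(lam - (i : ℝ) ^ 2) := by simp [f]

theorem sum_ceil_sqrt_sub_sq_le {lam : ℝ} (hlam : 0 ≤ lam) :
    ∑ i ∈ range (⌊√lam⌋₊ + 1), (⌈√(lam - (i : ℝ) ^ 2)⌉₊ : ℝ) ≤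
      π * lam / 4 + 2 * ⌊√lam⌋₊ + 1 := by
  set m := ⌊√lam⌋₊
  set f : ℝ → ℝ := fun x => √(lam - x ^ 2)
  have hcont : Continuous f := by fun_prop
  have hanti : AntitoneOn f (Set.Icc 0 (0 + m)) :=
    (antitoneOn_sqrt_sub_sq lam).mono Set.Icc_subset_Ici_self
  have hhead : (⌈√lam⌉₊ : ℝ) ≤ m + 1 := by exact_mod_cast Nat.ceil_le_floor_add_one √lam
  have htail : ∑ i ∈ range m, (⌈f (i + 1 : ℕ)⌉₊ : ℝ) ≤ ∑ i ∈ range m, f (0 + (i + 1 : ℕ)) + m :=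
    calc ∑ i ∈ range m, (⌈f (i + 1 : ℕ)⌉₊ : ℝ) ≤ ∑ i ∈ range m, (f (0 + (i + 1 : ℕ)) + 1) := by
          gcongr with i
          rw [zero_add]
          exact (Nat.ceil_lt_add_one (sqrt_nonneg _)).le
      _ = ∑ i ∈ range m, f (0 + (i + 1 : ℕ)) + m := by simp [sum_add_distrib]
  have hriemann : ∑ i ∈ range m, f (0 + (i + 1 : ℕ)) ≤ π * lam / 4 := by
    refine hanti.sum_le_integral.trans ?_
    rw [← integral_sqrt_sub_sq hlam]
    exact intervalIntegral.integral_mono_interval le_rfl (by positivity)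
      (by rw [zero_add]; exact Nat.floor_le (sqrt_nonneg _))
      (Filter.Eventually.of_forall fun x => sqrt_nonneg _) (hcont.intervalIntegrable _ _)
  rw [sum_range_succ']
  simp only [Nat.cast_zero, zero_pow two_ne_zero, sub_zero]
  linarith

theorem stmt_6 (lam : ℝ) (hlam : 0 < lam) :
    π * lam / 4 <
      (({p : ℕ × ℕ | (p.1 : ℝ) ^ 2 + (p.2 : ℝ) ^ 2 < lam}.ncard : ℝ)) ∧
    (({p : ℕ × ℕ | (p.1 : ℝ) ^ 2 + (p.2 : ℝ) ^ 2 < lam}.ncard : ℝ)) ≤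
      π * lam / 4 + 2 * (⌊Real.sqrt lam⌋ : ℝ) + 1 := by
  rw [ncard_sq_add_sq_lt_eq_sum, Nat.cast_sum, ← natCast_floor_eq_intCast_floor (sqrt_nonneg lam)]
  refine ⟨?_, sum_ceil_sqrt_sub_sq_le hlam.le⟩
  calc π * lam / 4 < ∑ i ∈ range (⌊√lam⌋₊ + 1), √(lam - (i : ℝ) ^ 2) :=
        pi_mul_div_four_lt_sum_sqrt_sub_sq hlam
    _ ≤ ∑ i ∈ range (⌊√lam⌋₊ + 1), (⌈√(lam - (i : ℝ) ^ 2)⌉₊ : ℝ) :=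
        sum_le_sum fun i _ => Nat.le_ceil _
end

section
/- For every real number λ ≥ 2, the number of pairs (i,j) of positive integers with i² + j² < λ is strictly greater than πλ/4 − 2√λ + 1. -/
open Real intervalIntegral

lemma quarter (r : ℝ) (hr : 0 ≤ r) : ∫ x in (0:ℝ)..r, Real.sqrt (r^2 - x^2) = π * r^2 / 4 := by
  rcases eq_or_lt_of_le hr with h | h
  · simp [← h]
  have h01 : ∫ x in (0:ℝ)..1, Real.sqrt (1 - x^2) = π / 4 := by
    have heven := intervalIntegral.integral_comp_neg (a := (0:ℝ)) (b := 1)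
      (fun x => Real.sqrt (1 - x^2))
    simp only [neg_sq, neg_zero, neg_neg] at heven
    have h2 := integral_sqrt_one_sub_sq
    rw [← intervalIntegral.integral_add_adjacent_intervals (a := (-1:ℝ)) (b := 0) (c := 1)
      (by apply Continuous.intervalIntegrable; continuity)
      (by apply Continuous.intervalIntegrable; continuity), ← heven] at h2
    linarith
  have key : ∫ x in (0:ℝ)..r, Real.sqrt (r^2 - x^2)
      = ∫ x in (0:ℝ)..r, r * Real.sqrt (1 - (r⁻¹ * x)^2) := by
    apply intervalIntegral.integral_congr
    intro x hx
    simp only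
    rw [show r^2 - x^2 = r^2 * (1 - (r⁻¹*x)^2) by field_simp,
      Real.sqrt_mul (by positivity), Real.sqrt_sq hr]
  rw [key, intervalIntegral.integral_const_mul,
    intervalIntegral.integral_comp_mul_left (fun u => Real.sqrt (1 - u^2)) (by positivity : r⁻¹ ≠ 0)]
  simp only [mul_zero, inv_inv]
  rw [inv_mul_cancel₀ (ne_of_gt h), h01]
  simp only [smul_eq_mul]
  ring

set_option maxHeartbeats 1000000 in
theorem stmt_7 (lam : ℝ) (hlam : 2 ≤ lam) :
    π * lam / 4 - 2 * Real.sqrt lam + 1 <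
      (({p : ℕ × ℕ | 1 ≤ p.1 ∧ 1 ≤ p.2 ∧ (p.1 : ℝ) ^ 2 + (p.2 : ℝ) ^ 2 < lam}.ncard : ℝ)) := by
  have hlam0 : (0:ℝ) ≤ lam := by linarith
  set r := Real.sqrt lam with hrdef
  have hr0 : 0 ≤ r := Real.sqrt_nonneg _
  have hr2 : r^2 = lam := Real.sq_sqrt hlam0
  have hr1 : 1 < r := by
    have h := Real.sqrt_lt_sqrt (by norm_num : (0:ℝ) ≤ 1) (show (1:ℝ) < lam by linarith)
    rwa [Real.sqrt_one] at h
  set s := Real.sqrt (lam - 1) with hsdef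
  have hs2 : s^2 = lam - 1 := Real.sq_sqrt (by linarith)
  have hs1 : 1 ≤ s := by
    have h := Real.sqrt_le_sqrt (show (1:ℝ) ≤ lam - 1 by linarith)
    rwa [Real.sqrt_one] at h
  have hsr : s ≤ r := Real.sqrt_le_sqrt (by linarith)
  set n := ⌈r⌉₊ with hndef
  have hrn : r ≤ (n:ℝ) := Nat.le_ceil r
  set G : ℝ → ℝ := fun x => max (Real.sqrt (lam - x^2) - 1) 0 with hGdef
  have hfc : Continuous (fun x : ℝ => Real.sqrt (lam - x^2)) := by
    exact Real.continuous_sqrt.comp (by continuity)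
  have hGcont : Continuous G := Continuous.max (hfc.sub continuous_const) continuous_const
  have hGnonneg : ∀ x, 0 ≤ G x := fun x => le_max_right _ _
  -- the set equals a finset
  classical
  set T := (Finset.Icc 1 n ×ˢ Finset.Icc 1 n).filter
    (fun p : ℕ × ℕ => (p.1:ℝ)^2 + (p.2:ℝ)^2 < lam) with hTdef
  have hcastlt : ∀ i : ℕ, (i:ℝ)^2 < lam → i ≤ n := by
    intro i hi
    have h1 : (i:ℝ) < r := lt_of_pow_lt_pow_left₀ 2 hr0 (by rwa [hr2])
    exact_mod_cast (h1.trans_le hrn).le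
  have hST : {p : ℕ × ℕ | 1 ≤ p.1 ∧ 1 ≤ p.2 ∧ (p.1 : ℝ) ^ 2 + (p.2 : ℝ) ^ 2 < lam} = ↑T := by
    ext ⟨i, j⟩
    simp only [Set.mem_setOf_eq, hTdef, Finset.coe_filter, Finset.mem_product, Finset.mem_Icc]
    constructor
    · rintro ⟨h1, h2, h3⟩
      have hj0 : (0:ℝ) ≤ (j:ℝ)^2 := sq_nonneg _
      have hi0 : (0:ℝ) ≤ (i:ℝ)^2 := sq_nonneg _
      exact ⟨⟨⟨h1, hcastlt i (by linarith)⟩, ⟨h2, hcastlt j (by linarith)⟩⟩, h3⟩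
    · rintro ⟨⟨⟨h1, _⟩, ⟨h2, _⟩⟩, h3⟩
      exact ⟨h1, h2, h3⟩
  rw [hST, Set.ncard_coe_finset]
  -- column decomposition
  have hcard : T.card = ∑ i ∈ Finset.Icc 1 n,
      ((Finset.Icc 1 n).filter (fun j : ℕ => (i:ℝ)^2 + (j:ℝ)^2 < lam)).card := by
    rw [hTdef, Finset.card_filter, Finset.sum_product]
    exact Finset.sum_congr rfl fun i _ => (Finset.card_filter _ _).symm
  -- column lower bound
  have hcol : ∀ i ∈ Finset.Icc 1 n, G (i:ℝ) ≤
      (((Finset.Icc 1 n).filter (fun j : ℕ => (i:ℝ)^2 + (j:ℝ)^2 < lam)).card : ℝ) := by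
    intro i _
    rcases le_or_gt (Real.sqrt (lam - (i:ℝ)^2)) 1 with h | h
    · have : G (i:ℝ) = 0 := max_eq_right (by linarith)
      rw [this]; positivity
    · have hGi : G (i:ℝ) = Real.sqrt (lam - (i:ℝ)^2) - 1 := max_eq_left (by linarith)
      rw [hGi]
      set t := lam - (i:ℝ)^2 with htdef
      have ht0 : 0 < t := Real.sqrt_pos.mp (lt_trans one_pos h)
      have hceil1 : 1 ≤ ⌈Real.sqrt t⌉₊ := le_of_lt (Nat.lt_ceil.mpr (by exact_mod_cast h))
      set k := ⌈Real.sqrt t⌉₊ - 1 with hkdef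
      have hkcast : (k:ℝ) = (⌈Real.sqrt t⌉₊ : ℝ) - 1 := by
        rw [hkdef, Nat.cast_sub hceil1, Nat.cast_one]
      have hsub : Finset.Icc 1 k ⊆
          (Finset.Icc 1 n).filter (fun j : ℕ => (i:ℝ)^2 + (j:ℝ)^2 < lam) := by
        intro j hj
        rw [Finset.mem_Icc] at hj
        obtain ⟨hj1, hjk⟩ := hj
        have hjr : (j:ℝ) < Real.sqrt t := by
          have h1 : (j:ℝ) ≤ (k:ℝ) := Nat.cast_le.mpr hjk
          have h2 : (⌈Real.sqrt t⌉₊:ℝ) < Real.sqrt t + 1 :=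
            Nat.ceil_lt_add_one (Real.sqrt_nonneg _)
          rw [hkcast] at h1; linarith
        have hjsq : (j:ℝ)^2 < t := by
          have h3 : Real.sqrt t ^ 2 = t := Real.sq_sqrt ht0.le
          nlinarith [(by positivity : (0:ℝ) ≤ (j:ℝ))]
        rw [Finset.mem_filter, Finset.mem_Icc]
        refine ⟨⟨hj1, hcastlt j (by rw [htdef] at hjsq; nlinarith [sq_nonneg (i:ℝ)])⟩, by
          rw [htdef] at hjsq; linarith⟩
      have hcardk : k ≤ ((Finset.Icc 1 n).filter (fun j : ℕ => (i:ℝ)^2 + (j:ℝ)^2 < lam)).card := by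
        have := Finset.card_le_card hsub
        simpa [Nat.card_Icc] using this
      have h5 : Real.sqrt t ≤ (⌈Real.sqrt t⌉₊ : ℝ) := Nat.le_ceil _
      have h6 : (k:ℝ) ≤ _ := Nat.cast_le.mpr hcardk
      linarith [hkcast ▸ h6]
  -- sum vs integral
  have hsum1 : ∑ i ∈ Finset.Icc 1 n, G (i:ℝ) ≤ (T.card : ℝ) := by
    rw [hcard]
    push_cast
    exact Finset.sum_le_sum hcol
  have hshift : ∑ i ∈ Finset.Icc 1 n, G (i:ℝ) = ∑ k ∈ Finset.range n, G (1 + (k:ℝ)) := by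
    rw [← Finset.Ico_add_one_right_eq_Icc, Finset.sum_Ico_eq_sum_range]
    refine Finset.sum_congr (by norm_num) fun k _ => ?_
    push_cast
    ring_nf
  have hanti : AntitoneOn G (Set.Icc (1:ℝ) (1 + (n:ℝ))) := by
    intro a ha b hb hab
    simp only [hGdef]
    have h1 : lam - b^2 ≤ lam - a^2 := by nlinarith [ha.1]
    exact max_le_max (sub_le_sub_right (Real.sqrt_le_sqrt h1) 1) le_rfl
  have hint1 : ∫ x in (1:ℝ)..(1 + (n:ℝ)), G x ≤ ∑ k ∈ Finset.range n, G (1 + (k:ℝ)) := by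
    exact AntitoneOn.integral_le_sum hanti
  have hs1n : s ≤ 1 + (n:ℝ) := by linarith
  have hsplitG : ∫ x in (1:ℝ)..s, G x ≤ ∫ x in (1:ℝ)..(1 + (n:ℝ)), G x := by
    rw [← intervalIntegral.integral_add_adjacent_intervals (a := (1:ℝ)) (b := s) (c := 1 + (n:ℝ))
      (hGcont.intervalIntegrable _ _) (hGcont.intervalIntegrable _ _)]
    have : 0 ≤ ∫ x in s..(1 + (n:ℝ)), G x :=
      intervalIntegral.integral_nonneg hs1n (fun x _ => hGnonneg x)
    linarith
  have hGs : ∫ x in (1:ℝ)..s, G x = ∫ x in (1:ℝ)..s, (Real.sqrt (lam - x^2) - 1) := by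
    apply intervalIntegral.integral_congr
    intro x hx
    rw [Set.uIcc_of_le hs1] at hx
    have hx2 : x^2 ≤ s^2 := by nlinarith [hx.1, hx.2]
    have : (1:ℝ) ≤ Real.sqrt (lam - x^2) := by
      have := Real.sqrt_le_sqrt (show (1:ℝ) ≤ lam - x^2 by rw [hs2] at hx2; linarith)
      simpa using this
    exact max_eq_left (by linarith)
  have hIsub : ∫ x in (1:ℝ)..s, (Real.sqrt (lam - x^2) - 1)
      = (∫ x in (1:ℝ)..s, Real.sqrt (lam - x^2)) - (s - 1) := by
    rw [intervalIntegral.integral_sub (hfc.intervalIntegrable _ _)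
      (_root_.intervalIntegrable_const), intervalIntegral.integral_const]
    simp
  have hquarter : ∫ x in (0:ℝ)..r, Real.sqrt (lam - x^2) = π * lam / 4 := by
    have := quarter r hr0
    rw [hr2] at this
    exact this
  have hadj : (∫ x in (0:ℝ)..r, Real.sqrt (lam - x^2))
      = (∫ x in (0:ℝ)..1, Real.sqrt (lam - x^2)) + (∫ x in (1:ℝ)..s, Real.sqrt (lam - x^2))
        + (∫ x in s..r, Real.sqrt (lam - x^2)) := by
    have e1 : (∫ x in (0:ℝ)..1, Real.sqrt (lam - x^2)) + (∫ x in (1:ℝ)..s, Real.sqrt (lam - x^2))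
        = ∫ x in (0:ℝ)..s, Real.sqrt (lam - x^2) :=
      intervalIntegral.integral_add_adjacent_intervals
        (hfc.intervalIntegrable _ _) (hfc.intervalIntegrable _ _)
    have e2 : (∫ x in (0:ℝ)..s, Real.sqrt (lam - x^2)) + (∫ x in s..r, Real.sqrt (lam - x^2))
        = ∫ x in (0:ℝ)..r, Real.sqrt (lam - x^2) :=
      intervalIntegral.integral_add_adjacent_intervals
        (hfc.intervalIntegrable _ _) (hfc.intervalIntegrable _ _)
    linarith
  have h01 : (∫ x in (0:ℝ)..1, Real.sqrt (lam - x^2)) < r := by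
    have ha : (∫ x in (0:ℝ)..(1/2:ℝ), Real.sqrt (lam - x^2)) ≤ (1/2) * r := by
      have := intervalIntegral.integral_mono_on (μ := MeasureTheory.volume) (by norm_num : (0:ℝ) ≤ 1/2)
        (hfc.intervalIntegrable _ _) (_root_.intervalIntegrable_const (c := r))
        (fun x _ => by
          rw [hrdef]
          exact Real.sqrt_le_sqrt (by nlinarith [sq_nonneg x]))
      rw [intervalIntegral.integral_const] at this
      simpa using this
    have hb : (∫ x in (1/2:ℝ)..1, Real.sqrt (lam - x^2)) ≤ (1/2) * Real.sqrt (lam - 1/4) := by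
      have := intervalIntegral.integral_mono_on (μ := MeasureTheory.volume) (by norm_num : (1/2:ℝ) ≤ 1)
        (hfc.intervalIntegrable _ _) (_root_.intervalIntegrable_const (c := Real.sqrt (lam - 1/4)))
        (fun x hx => Real.sqrt_le_sqrt (by nlinarith [hx.1, hx.2]))
      rw [intervalIntegral.integral_const] at this
      norm_num at this ⊢
      linarith
    have hc : Real.sqrt (lam - 1/4) < r := Real.sqrt_lt_sqrt (by linarith) (by linarith)
    have hd : (∫ x in (0:ℝ)..1, Real.sqrt (lam - x^2))
        = (∫ x in (0:ℝ)..(1/2:ℝ), Real.sqrt (lam - x^2))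
          + (∫ x in (1/2:ℝ)..1, Real.sqrt (lam - x^2)) := by
      rw [intervalIntegral.integral_add_adjacent_intervals
        (hfc.intervalIntegrable _ _) (hfc.intervalIntegrable _ _)]
    linarith
  have hsrI : (∫ x in s..r, Real.sqrt (lam - x^2)) ≤ r - s := by
    have := intervalIntegral.integral_mono_on (μ := MeasureTheory.volume) hsr
      (hfc.intervalIntegrable _ _) (_root_.intervalIntegrable_const (c := (1:ℝ)))
      (fun x hx => by
        have hx2 : s^2 ≤ x^2 := by nlinarith [hx.1, hx.2, hs1]
        have : Real.sqrt (lam - x^2) ≤ Real.sqrt 1 :=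
          Real.sqrt_le_sqrt (by rw [hs2] at hx2; linarith)
        simpa using this)
    rw [intervalIntegral.integral_const] at this
    simpa using this
  have hchain : π * lam / 4 - 2 * r + 1 < ∫ x in (1:ℝ)..s, G x := by
    rw [hGs, hIsub]
    have := hquarter
    linarith [hadj, h01, hsrI]
  calc π * lam / 4 - 2 * r + 1 < ∫ x in (1:ℝ)..s, G x := hchain
    _ ≤ ∫ x in (1:ℝ)..(1 + (n:ℝ)), G x := hsplitG
    _ ≤ ∑ k ∈ Finset.range n, G (1 + (k:ℝ)) := hint1
    _ = ∑ i ∈ Finset.Icc 1 n, G (i:ℝ) := hshift.symm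
    _ ≤ (T.card : ℝ) := hsum1
end

section
/- Let λ ≥ 2 be a real number and n a natural number such that (π/4)λ − 2√λ + 2 < n and n ≤ (π/5.783)·λ + 4√λ. Then n ≤ 519. -/
/-!
Write `s = √λ`. Subtracting the upper bound on `n` from the lower one gives
`π (1/4 - 1/5.783) s² < 6 s`, and since `π (1/4 - 1/5.783) > 6/25` this forces `s < 25`,
i.e. `λ < 625`. Feeding this back into the upper bound gives `n < 441`.
-/

open Real

lemma lt_div_of_mul_sq_lt_mul {a c x : ℝ} (hc : 0 < c) (hx : 0 ≤ x) (h : c * x ^ 2 < a * x) :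
    x < a / c := by
  have hx_pos : 0 < x := by
    rcases hx.lt_or_eq with hx | rfl
    · exact hx
    · simp at h
  rw [lt_div_iff₀ hc]
  nlinarith

lemma sqrt_lt_25_of_counting_bounds {lam : ℝ} (hlam : 0 ≤ lam)
    (h : π / 4 * lam - 2 * √lam + 2 < π / 5.783 * lam + 4 * √lam) : √lam < 25 := by
  have hc : 6 / 25 < π * (1 / 4 - 1 / 5.783) := by linarith [pi_gt_d2]
  have hquad : π * (1 / 4 - 1 / 5.783) * √lam ^ 2 < 6 * √lam := by
    rw [sq_sqrt hlam,
      show π * (1 / 4 - 1 / 5.783) * lam = π / 4 * lam - π / 5.783 * lam by ring]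
    linarith
  calc √lam < 6 / (π * (1 / 4 - 1 / 5.783)) :=
        lt_div_of_mul_sq_lt_mul (by linarith) (sqrt_nonneg lam) hquad
    _ < 6 / (6 / 25) := by gcongr
    _ = 25 := by norm_num

theorem stmt_8 (lam : ℝ) (n : ℕ) (hlam : 2 ≤ lam)
    (h1 : π / 4 * lam - 2 * Real.sqrt lam + 2 < (n : ℝ))
    (h2 : (n : ℝ) ≤ π / 5.783 * lam + 4 * Real.sqrt lam) :
    n ≤ 519 := by
  have hlam0 : 0 ≤ lam := by linarith
  have hs : √lam < 25 := sqrt_lt_25_of_counting_bounds hlam0 (h1.trans_le h2)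
  have hlam625 : lam < 625 := by
    rw [sqrt_lt' (by norm_num)] at hs
    linarith
  have hn : (n : ℝ) < 520 :=
    calc (n : ℝ) ≤ π / 5.783 * lam + 4 * √lam := h2
      _ ≤ 3.15 / 5.783 * 625 + 4 * 25 := by gcongr; exact pi_lt_d2.le
      _ < 520 := by norm_num
  have : n < 520 := by exact_mod_cast hn
  omega
end

section
/- Let p ≠ q be natural numbers, let θ ∈ ℝ with cos θ ≠ 0 and sin θ ≠ 0, and define Φ(θ,x,y) = cos θ · cos(px)·cos(qy) + sin θ · cos(py)·cos(qx). Suppose y₀ ∈ ℝ satisfies Φ(θ,0,y₀) = 0 and cos(p·y₀) ≠ 0. Then: (a) the second partial derivative of Φ in x at (θ,0,y₀) equals sin θ · cos(p·y₀) · (p² − q²); (b) the second partial derivative of Φ in y at (θ,0,y₀) equals sin θ · cos(p·y₀) · (q² − p²); (c) the mixed second partial derivative of Φ in x and y at (θ,0,y₀) equals 0; (d) the partial derivative of Φ in θ at (θ,0,y₀) equals cos(p·y₀)/cos θ. In particular the Hessian of (x,y) ↦ Φ(θ,x,y) at (0,y₀) is nondegenerate and indefinite, and ∂_θ Φ(θ,0,y₀)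 ≠ 0. -/
/-! The zero condition `Φ(θ,0,y₀) = 0` reads `cos θ cos(q y₀) = -sin θ cos(p y₀)`. Along each
coordinate line through `(0,y₀)` the eigenfunction is a combination of two cosines, so its second
derivatives are read off directly and, after this substitution, the pure ones become multiples of
`sin θ cos(p y₀)`; the mixed derivative vanishes because it carries a factor `sin 0`. Hence the
Hessian is `sin θ cos(p y₀) (p² - q²) · diag(1, -1)`, with negative determinant, and
`∂_θ Φ = cos(p y₀) / cos θ` by `sin² θ + cos² θ = 1`. -/

open Real

noncomputable def neumannPair (p q θ x y : ℝ) : ℝ :=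
  cos θ * (cos (p * x) * cos (q * y)) + sin θ * (cos (p * y) * cos (q * x))

section CosineCombination

variable (a b c d : ℝ)

lemma hasDerivAt_cos_comb (x : ℝ) :
    HasDerivAt (fun x => a * cos (c * x) + b * cos (d * x))
      (-(a * c) * sin (c * x) - b * d * sin (d * x)) x := by
  have hc := (((hasDerivAt_id' x).const_mul c).cos).const_mul a
  have hd := (((hasDerivAt_id' x).const_mul d).cos).const_mul b
  exact (hc.add hd).congr_deriv (by ring)

lemma hasDerivAt_sin_comb (x : ℝ) :
    HasDerivAt (fun x => a * sin (c * x) + b * sin (d * x))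
      (a * c * cos (c * x) + b * d * cos (d * x)) x := by
  have hc := (((hasDerivAt_id' x).const_mul c).sin).const_mul a
  have hd := (((hasDerivAt_id' x).const_mul d).sin).const_mul b
  exact (hc.add hd).congr_deriv (by ring)

lemma deriv_cos_comb_zero : deriv (fun x => a * cos (c * x) + b * cos (d * x)) 0 = 0 := by
  simp [(hasDerivAt_cos_comb a b c d 0).deriv]

lemma deriv_deriv_cos_comb (x : ℝ) :
    deriv (deriv fun x => a * cos (c * x) + b * cos (d * x)) x
      = -(a * c ^ 2 * cos (c * x) + b * d ^ 2 * cos (d * x)) := by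
  have hderiv : deriv (fun x => a * cos (c * x) + b * cos (d * x))
      = fun x => -(a * c) * sin (c * x) + -(b * d) * sin (d * x) := by
    funext x
    rw [(hasDerivAt_cos_comb a b c d x).deriv]
    ring
  rw [hderiv, (hasDerivAt_sin_comb _ _ c d x).deriv]
  ring

end CosineCombination

section NeumannPair

variable (p q θ : ℝ)

lemma neumannPair_eq_comb_x (y : ℝ) :
    (fun x => neumannPair p q θ x y)
      = fun x => cos θ * cos (q * y) * cos (p * x) + sin θ * cos (p * y) * cos (q * x) := by
  funext x; unfold neumannPair; ring

lemma neumannPair_eq_comb_y (x : ℝ) :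
    (fun y => neumannPair p q θ x y)
      = fun y => cos θ * cos (p * x) * cos (q * y) + sin θ * cos (q * x) * cos (p * y) := by
  funext y; unfold neumannPair; ring

lemma deriv_deriv_neumannPair_x (y₀ : ℝ) :
    deriv (deriv fun x => neumannPair p q θ x y₀) 0
      = -(cos θ * cos (q * y₀) * p ^ 2 + sin θ * cos (p * y₀) * q ^ 2) := by
  rw [neumannPair_eq_comb_x, deriv_deriv_cos_comb]
  simp

lemma deriv_deriv_neumannPair_y (y₀ : ℝ) :
    deriv (deriv fun y => neumannPair p q θ 0 y) y₀
      = -(cos θ * cos (q * y₀) * q ^ 2 + sin θ * cos (p * y₀) * p ^ 2) := by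
  rw [neumannPair_eq_comb_y, deriv_deriv_cos_comb]
  simp only [mul_zero, cos_zero, mul_one]
  ring

lemma deriv_deriv_neumannPair_mixed (y₀ : ℝ) :
    deriv (fun x => deriv (fun y => neumannPair p q θ x y) y₀) 0 = 0 := by
  have hslice : (fun x => deriv (fun y => neumannPair p q θ x y) y₀)
      = fun x => -(cos θ * q * sin (q * y₀)) * cos (p * x)
          + -(sin θ * p * sin (p * y₀)) * cos (q * x) := by
    funext x
    rw [neumannPair_eq_comb_y, (hasDerivAt_cos_comb _ _ q p y₀).deriv]
    ring
  rw [hslice, deriv_cos_comb_zero]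

lemma deriv_neumannPair_angle (y₀ : ℝ) :
    deriv (fun θ' => neumannPair p q θ' 0 y₀) θ
      = -sin θ * cos (q * y₀) + cos θ * cos (p * y₀) := by
  have h := ((hasDerivAt_cos θ).mul_const (cos (q * y₀))).add
    ((hasDerivAt_sin θ).mul_const (cos (p * y₀)))
  simp only [neumannPair, mul_zero, cos_zero, one_mul, mul_one]
  exact h.deriv

end NeumannPair

theorem stmt_13 (p q : ℕ) (hpq : p ≠ q) (θ y₀ : ℝ)
    (hc : Real.cos θ ≠ 0) (hs : Real.sin θ ≠ 0)
    (Φ : ℝ → ℝ → ℝ → ℝ)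
    (hΦ : ∀ θ' x y : ℝ, Φ θ' x y =
      Real.cos θ' * (Real.cos ((p : ℝ) * x) * Real.cos ((q : ℝ) * y)) +
      Real.sin θ' * (Real.cos ((p : ℝ) * y) * Real.cos ((q : ℝ) * x)))
    (h0 : Φ θ 0 y₀ = 0) (hcp : Real.cos ((p : ℝ) * y₀) ≠ 0) :
    deriv (deriv (fun x => Φ θ x y₀)) 0 =
        Real.sin θ * Real.cos ((p : ℝ) * y₀) * ((p : ℝ) ^ 2 - (q : ℝ) ^ 2) ∧
    deriv (deriv (fun y => Φ θ 0 y)) y₀ =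
        Real.sin θ * Real.cos ((p : ℝ) * y₀) * ((q : ℝ) ^ 2 - (p : ℝ) ^ 2) ∧
    deriv (fun x => deriv (fun y => Φ θ x y) y₀) 0 = 0 ∧
    deriv (fun θ' => Φ θ' 0 y₀) θ = Real.cos ((p : ℝ) * y₀) / Real.cos θ ∧
    -- the Hessian of (x,y) ↦ Φ θ x y at (0,y₀) is nondegenerate and indefinite:
    -- its determinant is negative
    deriv (deriv (fun x => Φ θ x y₀)) 0 * deriv (deriv (fun y => Φ θ 0 y)) y₀ -
        (deriv (fun x => deriv (fun y => Φ θ x y) y₀) 0) ^ 2 < 0 ∧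
    deriv (fun θ' => Φ θ' 0 y₀) θ ≠ 0 := by
  obtain rfl : Φ = neumannPair p q := by
    funext θ' x y; exact hΦ θ' x y
  have hzero : cos θ * cos (q * y₀) = -(sin θ * cos (p * y₀)) := by
    simpa [neumannPair, eq_neg_iff_add_eq_zero] using h0
  have hxx := deriv_deriv_neumannPair_x p q θ y₀
  have hyy := deriv_deriv_neumannPair_y p q θ y₀
  rw [hzero] at hxx hyy
  have hθ : deriv (fun θ' => neumannPair p q θ' 0 y₀) θ = cos (p * y₀) / cos θ := by
    rw [deriv_neumannPair_angle, eq_div_iff hc]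
    linear_combination (-sin θ) * hzero + cos (p * y₀) * sin_sq_add_cos_sq θ
  have hpq' : (p : ℝ) ^ 2 - (q : ℝ) ^ 2 ≠ 0 :=
    sub_ne_zero.2 (by exact_mod_cast (Nat.pow_left_injective two_ne_zero).ne hpq)
  refine ⟨by rw [hxx]; ring, by rw [hyy]; ring, deriv_deriv_neumannPair_mixed .., hθ, ?_,
    by rw [hθ]; exact div_ne_zero hcp hc⟩
  rw [hxx, hyy, deriv_deriv_neumannPair_mixed]
  have hpos : 0 < (sin θ * cos (p * y₀) * ((p : ℝ) ^ 2 - (q : ℝ) ^ 2)) ^ 2 := by positivity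
  linear_combination hpos
end

section
/- Let p be a natural number and let α be a real number with pπ < α < (p+1)π. Define u : ℝ → ℝ by u(x) = cos(αx/π) if p is even and u(x) = sin(αx/π) if p is odd. Then the set {(x,y) ∈ (−π/2, π/2) × (−π/2, π/2) : u(x)·u(y) ≠ 0} has exactly (p+1)² connected components. -/
open Real Set

noncomputable def stmtAA (p : ℕ) (α : ℝ) (j : ℕ) : ℝ :=
  max (-(π/2)) (min (π/2) (π^2 * (2*(j:ℝ) - p - 1) / (2*α)))

namespace Stmt15

variable {p : ℕ} {α : ℝ}

lemma halpha (h1 : (p : ℝ) * π < α) : 0 < α :=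
  lt_of_le_of_lt (by positivity) h1

lemma aa_ge (j : ℕ) : -(π/2) ≤ stmtAA p α j := le_max_left _ _

lemma aa_le (j : ℕ) : stmtAA p α j ≤ π/2 :=
  max_le (by linarith [pi_pos]) (min_le_left _ _)

lemma aa_interior (h1 : (p:ℝ)*π < α) {j : ℕ} (hj1 : 1 ≤ j) (hjp : j ≤ p) :
    stmtAA p α j = π^2 * (2*(j:ℝ) - p - 1) / (2*α) := by
  have hα := halpha h1
  have hπ := pi_pos
  have hj1' : (1:ℝ) ≤ (j:ℝ) := by exact_mod_cast hj1
  have hjp' : (j:ℝ) ≤ (p:ℝ) := by exact_mod_cast hjp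
  have hub : π^2 * (2*(j:ℝ) - p - 1) / (2*α) ≤ π/2 := by
    rw [div_le_iff₀ (by linarith)]
    nlinarith [mul_pos hπ hπ]
  have hlb : -(π/2) ≤ π^2 * (2*(j:ℝ) - p - 1) / (2*α) := by
    rw [le_div_iff₀ (by linarith)]
    nlinarith [mul_pos hπ hπ]
  rw [stmtAA, min_eq_right hub, max_eq_right hlb]

lemma aa_zero (h1 : (p:ℝ)*π < α) (h2 : α < ((p:ℝ)+1)*π) : stmtAA p α 0 = -(π/2) := by
  have hα := halpha h1
  have hπ := pi_pos
  have hv : π^2 * (2*((0:ℕ):ℝ) - p - 1) / (2*α) ≤ -(π/2) := by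
    rw [div_le_iff₀ (by linarith)]
    push_cast
    nlinarith [mul_pos hπ hπ]
  rw [stmtAA, min_eq_right (le_trans hv (by linarith)), max_eq_left hv]

lemma aa_top (h1 : (p:ℝ)*π < α) (h2 : α < ((p:ℝ)+1)*π) : stmtAA p α (p+1) = π/2 := by
  have hα := halpha h1
  have hπ := pi_pos
  have hv : π/2 ≤ π^2 * (2*((p+1:ℕ):ℝ) - p - 1) / (2*α) := by
    rw [le_div_iff₀ (by linarith)]
    push_cast
    nlinarith [mul_pos hπ hπ]
  rw [stmtAA, min_eq_left hv, max_eq_right (by linarith)]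

lemma aa_mono (h1 : (p:ℝ)*π < α) : Monotone (stmtAA p α) := by
  have hα := halpha h1
  intro i j hij
  have hij' : (i:ℝ) ≤ j := by exact_mod_cast hij
  unfold stmtAA
  gcongr

lemma aa_strict (h1 : (p:ℝ)*π < α) (h2 : α < ((p:ℝ)+1)*π) {i : ℕ} (hi : i ≤ p) :
    stmtAA p α i < stmtAA p α (i+1) := by
  have hα := halpha h1
  have hπ := pi_pos
  have h2α : (0:ℝ) < 2*α := by linarith
  rcases Nat.eq_zero_or_pos i with rfl | hi0
  · rw [aa_zero h1 h2]
    rcases Nat.eq_zero_or_pos p with rfl | hp0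
    · have := aa_top h1 h2 (p := 0) (α := α)
      rw [this]
      linarith
    · rw [show 0+1 = 1 from rfl, aa_interior h1 le_rfl hp0]
      rw [lt_div_iff₀ h2α]
      have hp0' : (1:ℝ) ≤ (p:ℝ) := by exact_mod_cast hp0
      push_cast
      nlinarith [mul_pos hπ hπ]
  · rcases Nat.lt_or_ge i p with hip | hip
    · rw [aa_interior h1 hi0 hi, aa_interior h1 (by omega) (by omega)]
      rw [div_lt_div_iff₀ h2α h2α]
      push_cast
      nlinarith [mul_pos hπ hπ]
    · have hieq : i = p := le_antisymm hi hip
      subst hieq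
      rw [aa_interior h1 hi0 le_rfl, aa_top h1 h2]
      rw [div_lt_iff₀ h2α]
      nlinarith [mul_pos hπ hπ]

lemma u_zero_at (h1 : (p:ℝ)*π < α) (h2 : α < ((p:ℝ)+1)*π) {u : ℝ → ℝ}
    (hu : ∀ x : ℝ, u x = if Even p then Real.cos (α * x / π) else Real.sin (α * x / π))
    {j : ℕ} (hj1 : 1 ≤ j) (hjp : j ≤ p) : u (stmtAA p α j) = 0 := by
  have hα := halpha h1
  have hπ := pi_pos
  rw [hu, aa_interior h1 hj1 hjp]
  have harg : α * (π^2 * (2*(j:ℝ) - p - 1) / (2*α)) / π = (2*(j:ℝ) - p - 1) * (π/2) := by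
    field_simp
  rw [harg]
  rcases Nat.even_or_odd p with hp | hp
  · rw [if_pos hp]
    obtain ⟨q, hq⟩ := hp
    apply Real.cos_eq_zero_iff.2
    refine ⟨(j:ℤ) - q - 1, ?_⟩
    subst hq
    push_cast
    ring
  · rw [if_neg (Nat.not_even_iff_odd.mpr hp)]
    obtain ⟨q, hq⟩ := hp
    have : (2*(j:ℝ) - p - 1) * (π/2) = ((j:ℤ) - q - 1 : ℤ) * π := by
      subst hq
      push_cast
      ring
    rw [this, Real.sin_int_mul_pi]

lemma u_ne_zero (h1 : (p:ℝ)*π < α) (h2 : α < ((p:ℝ)+1)*π) {u : ℝ → ℝ}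
    (hu : ∀ x : ℝ, u x = if Even p then Real.cos (α * x / π) else Real.sin (α * x / π))
    {i : ℕ} (hi : i ≤ p) {x : ℝ} (hx : x ∈ Ioo (stmtAA p α i) (stmtAA p α (i+1))) :
    u x ≠ 0 := by
  have hα := halpha h1
  have hπ := pi_pos
  have h2α : (0:ℝ) < 2*α := by linarith
  have hip : (i:ℝ) ≤ p := by exact_mod_cast hi
  have hvi : π^2 * (2*(i:ℝ) - p - 1) / (2*α) ≤ stmtAA p α i := by
    have hub : π^2 * (2*(i:ℝ) - p - 1) / (2*α) ≤ π/2 := by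
      rw [div_le_iff₀ h2α]
      nlinarith [mul_pos hπ hπ]
    rw [stmtAA, min_eq_right hub]
    exact le_max_right _ _
  have hvi1 : stmtAA p α (i+1) ≤ π^2 * (2*((i+1:ℕ):ℝ) - p - 1) / (2*α) := by
    have hlb : -(π/2) ≤ π^2 * (2*((i+1:ℕ):ℝ) - p - 1) / (2*α) := by
      rw [le_div_iff₀ h2α]
      have hi0 : (0:ℝ) ≤ (i:ℝ) := Nat.cast_nonneg i
      push_cast
      nlinarith [mul_pos hπ hπ]
    rw [stmtAA]
    exact max_le hlb (min_le_right _ _)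
  obtain ⟨hx1, hx2⟩ := hx
  have hx1' : π^2 * (2*(i:ℝ) - p - 1) < x * (2*α) := by
    rw [← div_lt_iff₀ h2α]
    exact lt_of_le_of_lt hvi hx1
  have hx2' : x * (2*α) < π^2 * (2*(i:ℝ) + 1 - p) := by
    have := lt_of_lt_of_le hx2 hvi1
    rw [lt_div_iff₀ h2α] at this
    push_cast at this
    nlinarith
  rw [hu]
  rcases Nat.even_or_odd p with hp | hp
  · rw [if_pos hp]
    intro h0
    obtain ⟨k, hk⟩ := Real.cos_eq_zero_iff.1 h0
    rw [div_eq_iff (ne_of_gt hπ)] at hk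
    obtain ⟨q, hq⟩ := hp
    have hA : (2*(i:ℤ) - p - 1 : ℤ) < 2*k+1 := by
      have : ((2*(i:ℤ) - p - 1 : ℤ):ℝ) < ((2*k+1 : ℤ):ℝ) := by
        push_cast
        nlinarith [mul_pos hπ hπ]
      exact_mod_cast this
    have hB : (2*k+1 : ℤ) < 2*(i:ℤ) - p + 1 := by
      have : ((2*k+1 : ℤ):ℝ) < ((2*(i:ℤ) - p + 1 : ℤ):ℝ) := by
        push_cast
        nlinarith [mul_pos hπ hπ]
      exact_mod_cast this
    omega
  · rw [if_neg (Nat.not_even_iff_odd.mpr hp)]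
    intro h0
    obtain ⟨k, hk⟩ := Real.sin_eq_zero_iff.1 h0
    have hk' : α * x = (k:ℝ) * π * π := by
      field_simp at hk
      linarith [hk]
    obtain ⟨q, hq⟩ := hp
    have hA : (2*(i:ℤ) - p - 1 : ℤ) < 2*k := by
      have : ((2*(i:ℤ) - p - 1 : ℤ):ℝ) < ((2*k : ℤ):ℝ) := by
        push_cast
        nlinarith [mul_pos hπ hπ]
      exact_mod_cast this
    have hB : (2*k : ℤ) < 2*(i:ℤ) - p + 1 := by
      have : ((2*k : ℤ):ℝ) < ((2*(i:ℤ) - p + 1 : ℤ):ℝ) := by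
        push_cast
        nlinarith [mul_pos hπ hπ]
      exact_mod_cast this
    omega

lemma coverage (h1 : (p:ℝ)*π < α) (h2 : α < ((p:ℝ)+1)*π) {u : ℝ → ℝ}
    (hu : ∀ x : ℝ, u x = if Even p then Real.cos (α * x / π) else Real.sin (α * x / π))
    {x : ℝ} (hx : x ∈ Ioo (-(π/2)) (π/2)) (hne : u x ≠ 0) :
    ∃ i ≤ p, x ∈ Ioo (stmtAA p α i) (stmtAA p α (i+1)) := by
  classical
  set F := (Finset.range (p+1)).filter (fun i => stmtAA p α i < x) with hF
  have h0F : 0 ∈ F := by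
    simp [hF, Finset.mem_filter, aa_zero h1 h2, hx.1]
  have hFne : F.Nonempty := ⟨0, h0F⟩
  set i := F.max' hFne with hi
  have hiF : i ∈ F := F.max'_mem hFne
  have hip : i ≤ p := by
    have := (Finset.mem_filter.1 hiF).1
    simpa [Nat.lt_succ_iff] using this
  have hilt : stmtAA p α i < x := (Finset.mem_filter.1 hiF).2
  refine ⟨i, hip, hilt, ?_⟩
  by_contra hge
  push_neg at hge
  rcases eq_or_lt_of_le hge with heq | hlt
  · -- x = stmtAA p α (i+1)
    rcases Nat.lt_or_ge i p with hip' | hip'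
    · exact hne (heq ▸ u_zero_at h1 h2 hu (Nat.succ_le_succ (Nat.zero_le i)) (by omega))
    · have hEq : i = p := le_antisymm hip hip'
      rw [hEq, aa_top h1 h2] at heq
      exact absurd heq.symm (ne_of_lt hx.2)
  · -- stmtAA p α (i+1) < x
    rcases Nat.lt_or_ge i p with hip' | hip'
    · have : i + 1 ∈ F := by
        simp only [hF, Finset.mem_filter, Finset.mem_range]
        exact ⟨by omega, hlt⟩
      have := F.le_max' _ this
      omega
    · have hEq : i = p := le_antisymm hip hip'
      rw [hEq, aa_top h1 h2] at hlt
      exact absurd hlt (not_lt.2 (le_of_lt hx.2))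
end Stmt15

theorem stmt_15 (p : ℕ) (α : ℝ) (h1 : (p : ℝ) * π < α) (h2 : α < ((p : ℝ) + 1) * π)
    (u : ℝ → ℝ)
    (hu : ∀ x : ℝ, u x = if Even p then Real.cos (α * x / π) else Real.sin (α * x / π)) :
    Nat.card (ConnectedComponents
      {z : ℝ × ℝ // z.1 ∈ Set.Ioo (-(π / 2)) (π / 2) ∧
        z.2 ∈ Set.Ioo (-(π / 2)) (π / 2) ∧ u z.1 * u z.2 ≠ 0}) = (p + 1) ^ 2 := by
  classical
  have hπ := Real.pi_pos
  set aa := stmtAA p α with haa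
  set J : ℕ → Set ℝ := fun i => Set.Ioo (aa i) (aa (i+1)) with hJ
  let S : Set (ℝ × ℝ) := {z | z.1 ∈ Set.Ioo (-(π / 2)) (π / 2) ∧
        z.2 ∈ Set.Ioo (-(π / 2)) (π / 2) ∧ u z.1 * u z.2 ≠ 0}
  show Nat.card (ConnectedComponents S) = (p + 1) ^ 2
  set U : Fin (p+1) × Fin (p+1) → Set (ℝ × ℝ) := fun q => (J q.1) ×ˢ (J q.2) with hU
  have hJI : ∀ i, i ≤ p → J i ⊆ Set.Ioo (-(π/2)) (π/2) := by
    intro i hi x hx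
    exact ⟨lt_of_le_of_lt (Stmt15.aa_ge i) hx.1, lt_of_lt_of_le hx.2 (Stmt15.aa_le (i+1))⟩
  have hJu : ∀ i, i ≤ p → ∀ x ∈ J i, u x ≠ 0 := fun i hi x hx =>
    Stmt15.u_ne_zero h1 h2 hu hi hx
  have hJdisj : ∀ i j, i ≠ j → ∀ x, x ∈ J i → x ∉ J j := by
    intro i j hij x hxi hxj
    rcases Nat.lt_or_ge i j with h | h
    · have hle : aa (i+1) ≤ aa j := Stmt15.aa_mono h1 (by omega)
      linarith [hxi.2, hxj.1]
    · have hji : j < i := by omega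
      have hle : aa (j+1) ≤ aa i := Stmt15.aa_mono h1 (by omega)
      linarith [hxi.1, hxj.2]
  have hqle : ∀ q : Fin (p+1), (q : ℕ) ≤ p := fun q => Nat.lt_succ_iff.mp q.isLt
  have hUS : ∀ (q : Fin (p+1) × Fin (p+1)) (z : ℝ × ℝ), z ∈ U q →
      z.1 ∈ Set.Ioo (-(π/2)) (π/2) ∧ z.2 ∈ Set.Ioo (-(π/2)) (π/2) ∧ u z.1 * u z.2 ≠ 0 := by
    intro q z hz
    obtain ⟨hz1, hz2⟩ := hz
    exact ⟨hJI _ (hqle q.1) hz1, hJI _ (hqle q.2) hz2,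
      mul_ne_zero (hJu _ (hqle q.1) _ hz1) (hJu _ (hqle q.2) _ hz2)⟩
  -- centers
  set cpt : Fin (p+1) → ℝ := fun i => (aa i + aa (i+1))/2 with hcpt
  have hcJ : ∀ i : Fin (p+1), cpt i ∈ J (i : ℕ) := by
    intro i
    have := Stmt15.aa_strict h1 h2 (hqle i)
    constructor <;> (simp only [hcpt]; linarith)
  have hwU : ∀ q : Fin (p+1) × Fin (p+1), (cpt q.1, cpt q.2) ∈ U q :=
    fun q => ⟨hcJ q.1, hcJ q.2⟩
  set w : Fin (p+1) × Fin (p+1) → S := fun q => ⟨(cpt q.1, cpt q.2), hUS q _ (hwU q)⟩ with hw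
  set f : Fin (p+1) × Fin (p+1) → ConnectedComponents S :=
    fun q => ConnectedComponents.mk (w q) with hf
  -- preconnectedness of preimages
  have hpre : ∀ q, IsPreconnected ((Subtype.val ⁻¹' (U q)) : Set S) := by
    intro q
    apply Topology.IsInducing.subtypeVal.isPreconnected_image.mp
    have himg : (Subtype.val '' ((Subtype.val ⁻¹' (U q)) : Set S) : Set (ℝ × ℝ)) = U q := by
      rw [Subtype.image_preimage_coe]
      refine Set.inter_eq_self_of_subset_right ?_
      intro z hz
      exact hUS q z hz
    rw [himg]
    exact isPreconnected_Ioo.prod isPreconnected_Ioo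
  have hsame : ∀ (q : Fin (p+1) × Fin (p+1)) (z : S), (z : ℝ × ℝ) ∈ U q →
      ConnectedComponents.mk z = f q := by
    intro q z hz
    have hzT : z ∈ (Subtype.val ⁻¹' (U q) : Set S) := hz
    have hwT : w q ∈ (Subtype.val ⁻¹' (U q) : Set S) := hwU q
    have hsub := (hpre q).subset_connectedComponent hwT
    exact ConnectedComponents.coe_eq_coe'.2 (hsub hzT)
  -- every point of X lies in some U q
  have hcov : ∀ z : S, ∃ q : Fin (p+1) × Fin (p+1), (z : ℝ × ℝ) ∈ U q := by
    intro z
    obtain ⟨hz1, hz2, hz3⟩ := z.2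
    have hu1 : u (z : ℝ × ℝ).1 ≠ 0 := fun h => hz3 (by rw [h]; ring)
    have hu2 : u (z : ℝ × ℝ).2 ≠ 0 := fun h => hz3 (by rw [h]; ring)
    obtain ⟨i, hip, hxi⟩ := Stmt15.coverage h1 h2 hu hz1 hu1
    obtain ⟨j, hjp, hxj⟩ := Stmt15.coverage h1 h2 hu hz2 hu2
    exact ⟨(⟨i, by omega⟩, ⟨j, by omega⟩), hxi, hxj⟩
  -- clopenness
  have hUopen : ∀ q, IsOpen (U q) := fun q => (isOpen_Ioo).prod isOpen_Ioo
  have hclop : ∀ q, IsClopen ((Subtype.val ⁻¹' (U q)) : Set S) := by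
    intro q
    refine ⟨?_, (hUopen q).preimage continuous_subtype_val⟩
    rw [← isOpen_compl_iff]
    have hcompl : ((Subtype.val ⁻¹' (U q)) : Set S)ᶜ =
        Subtype.val ⁻¹' (⋃ (q' : Fin (p+1) × Fin (p+1)) (_ : q' ≠ q), U q') := by
      ext z
      simp only [Set.mem_compl_iff, Set.mem_preimage, Set.mem_iUnion]
      constructor
      · intro hz
        obtain ⟨q', hq'⟩ := hcov z
        refine ⟨q', fun h => hz (h ▸ hq'), hq'⟩
      · rintro ⟨q', hne, hq'⟩ hzq
        rcases Prod.ext_iff.not.1 hne with _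
        have : q'.1 ≠ q.1 ∨ q'.2 ≠ q.2 := by
          by_contra hc
          push_neg at hc
          exact hne (Prod.ext hc.1 hc.2)
        rcases this with h | h
        · exact hJdisj _ _ (fun hh => h (Fin.ext hh)) _ hq'.1 hzq.1
        · exact hJdisj _ _ (fun hh => h (Fin.ext hh)) _ hq'.2 hzq.2
    rw [hcompl]
    exact (isOpen_iUnion fun q' => isOpen_iUnion fun _ => hUopen q').preimage
      continuous_subtype_val
  -- bijectivity
  have hsurj : Function.Surjective f := by
    intro c
    obtain ⟨z, rfl⟩ := ConnectedComponents.surjective_coe c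
    obtain ⟨q, hq⟩ := hcov z
    exact ⟨q, (hsame q z hq).symm⟩
  have hinj : Function.Injective f := by
    intro q q' hqq
    have h1' : w q ∈ connectedComponent (w q') := ConnectedComponents.coe_eq_coe'.1 hqq
    have h2' : connectedComponent (w q') ⊆ (Subtype.val ⁻¹' (U q') : Set S) :=
      (hclop q').connectedComponent_subset (hwU q')
    have hmem : ((w q : S) : ℝ × ℝ) ∈ U q' := h2' h1'
    have hmem' : ((w q : S) : ℝ × ℝ) ∈ U q := hwU q
    have e1 : (q.1 : ℕ) = q'.1 := by
      by_contra hc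
      exact hJdisj _ _ hc _ hmem'.1 hmem.1
    have e2 : (q.2 : ℕ) = q'.2 := by
      by_contra hc
      exact hJdisj _ _ hc _ hmem'.2 hmem.2
    exact Prod.ext (Fin.ext e1) (Fin.ext e2)
  have hcard := Nat.card_eq_of_bijective f ⟨hinj, hsurj⟩
  rw [← hcard]
  simp [Nat.card_eq_fintype_card, sq]
end

section
/- For h > 0 let a₀(h) be the unique real number with 0 ≤ a₀(h) < π and a₀(h)·sin(a₀(h)/2) = hπ·cos(a₀(h)/2). Then a₀(h)/√(2πh) tends to 1 as h tends to 0 from the right. -/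
/-!
Since `a₀(h) ∈ (0, π)`, the defining equation reads `a₀ tan (a₀/2) = hπ`, so
`a₀² / (2πh) = cos (a₀/2) / sinc (a₀/2)`. Jordan's inequality `sin (a/2) ≥ a/π` gives
`a₀ ≤ π √h`, hence `a₀ → 0`, and the right-hand side tends to `cos 0 / sinc 0 = 1`.
-/

open Real Filter Topology

namespace Real

theorem ne_zero_of_mul_sin_half_eq {a c : ℝ} (hc : c ≠ 0)
    (h : a * sin (a / 2) = c * cos (a / 2)) : a ≠ 0 := by
  rintro rfl
  exact hc (by simpa using h.symm)

theorem le_sqrt_of_mul_sin_half_eq {a c : ℝ} (ha : 0 ≤ a) (ha' : a ≤ π) (hc : 0 ≤ c)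
    (h : a * sin (a / 2) = c * cos (a / 2)) : a ≤ √(π * c) := by
  have jordan : 2 / π * (a / 2) ≤ sin (a / 2) := mul_le_sin (by positivity) (by linarith)
  have hsq : a ^ 2 / π ≤ c :=
    calc a ^ 2 / π = a * (2 / π * (a / 2)) := by ring
      _ ≤ a * sin (a / 2) := mul_le_mul_of_nonneg_left jordan ha
      _ = c * cos (a / 2) := h
      _ ≤ c := mul_le_of_le_one_right hc (cos_le_one _)
  rw [div_le_iff₀' pi_pos] at hsq
  exact le_sqrt_of_sq_le hsq

theorem sq_div_eq_cos_div_sinc_of_mul_sin_half_eq {a c : ℝ} (ha : 0 < a) (ha' : a < π)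
    (h : a * sin (a / 2) = c * cos (a / 2)) : a ^ 2 / (2 * c) = cos (a / 2) / sinc (a / 2) := by
  have hsin : 0 < sin (a / 2) := sin_pos_of_pos_of_lt_pi (by positivity) (by linarith)
  have hcos : 0 < cos (a / 2) := cos_pos_of_mem_Ioo ⟨by linarith, by linarith⟩
  have hc : c = a * sin (a / 2) / cos (a / 2) := by rw [h]; field_simp
  rw [sinc_of_ne_zero (by positivity), hc]
  field_simp

theorem tendsto_cos_div_sinc_nhds_zero : Tendsto (fun x => cos x / sinc x) (𝓝 0) (𝓝 1) := by
  have := (continuous_cos.tendsto 0).div (continuous_sinc.tendsto 0) (by simp)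
  rwa [cos_zero, sinc_zero, div_one] at this

end Real

theorem stmt_17 (a₀ : ℝ → ℝ)
    (ha : ∀ h : ℝ, 0 < h → 0 ≤ a₀ h ∧ a₀ h < π ∧
      a₀ h * Real.sin (a₀ h / 2) = h * π * Real.cos (a₀ h / 2)) :
    Filter.Tendsto (fun h : ℝ => a₀ h / Real.sqrt (2 * π * h))
      (nhdsWithin 0 (Set.Ioi 0)) (nhds 1) := by
  have hpos : ∀ h, 0 < h → 0 < a₀ h := fun h hh => by
    obtain ⟨h0, -, heq⟩ := ha h hh
    exact h0.lt_of_ne' (ne_zero_of_mul_sin_half_eq (by positivity) heq)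
  have hbound : ∀ h, 0 < h → a₀ h ≤ √(π * (h * π)) := fun h hh => by
    obtain ⟨h0, hlt, heq⟩ := ha h hh
    exact le_sqrt_of_mul_sin_half_eq h0 hlt.le (by positivity) heq
  have hsqrt : Tendsto (fun h : ℝ => √(π * (h * π))) (𝓝[>] 0) (𝓝 0) :=
    ((by fun_prop : Continuous fun h : ℝ => √(π * (h * π))).tendsto' 0 0 (by simp)).mono_left
      nhdsWithin_le_nhds
  have hlim : Tendsto a₀ (𝓝[>] 0) (𝓝 0) :=
    squeeze_zero' (eventually_nhdsWithin_of_forall fun h hh => (hpos h hh).le)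
      (eventually_nhdsWithin_of_forall hbound) hsqrt
  have hratio : Tendsto (fun h => √(cos (a₀ h / 2) / sinc (a₀ h / 2))) (𝓝[>] 0) (𝓝 1) := by
    have hhalf : Tendsto (fun h => a₀ h / 2) (𝓝[>] 0) (𝓝 0) := by
      simpa using hlim.div_const 2
    simpa using (tendsto_cos_div_sinc_nhds_zero.comp hhalf).sqrt
  refine hratio.congr' (eventually_nhdsWithin_of_forall fun h (hh : 0 < h) => ?_)
  obtain ⟨-, hlt, heq⟩ := ha h hh
  have hpos' := hpos h hh
  rw [← sq_div_eq_cos_div_sinc_of_mul_sin_half_eq hpos' hlt heq,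
    sqrt_div' _ (by positivity), sqrt_sq hpos'.le, show 2 * (h * π) = 2 * π * h by ring]
end

section
/- For h > 0 let a₂(h) be the unique real number with 2π ≤ a₂(h) < 3π and a₂(h)·sin(a₂(h)/2) = hπ·cos(a₂(h)/2). Then (a₂(h) − 2π)/h tends to 1 as h tends to 0 from the right. -/
open Real Filter

theorem stmt_18 (a₂ : ℝ → ℝ)
    (ha : ∀ h : ℝ, 0 < h → 2 * π ≤ a₂ h ∧ a₂ h < 3 * π ∧
      a₂ h * Real.sin (a₂ h / 2) = h * π * Real.cos (a₂ h / 2)) :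
    Filter.Tendsto (fun h : ℝ => (a₂ h - 2 * π) / h)
      (nhdsWithin 0 (Set.Ioi 0)) (nhds 1) := by
  have hπ := Real.pi_pos
  have hαpos : ∀ h : ℝ, 0 < h → 0 < a₂ h := fun h hh =>
    lt_of_lt_of_le (by positivity) (ha h hh).1
  -- key identity
  have key : ∀ h : ℝ, 0 < h → a₂ h - 2 * π = 2 * Real.arctan (h * π / a₂ h) := by
    intro h hh
    obtain ⟨h1, h2, h3⟩ := ha h hh
    have hα : 0 < a₂ h := hαpos h hh
    set α := a₂ h with hαdef
    set β := α - 2 * π with hβ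
    have hβ0 : 0 ≤ β := by simp [hβ]; linarith
    have hβπ : β < π := by simp [hβ]; linarith
    have hhalf : α / 2 = β / 2 + π := by rw [hβ]; ring
    have hs : Real.sin (α / 2) = -Real.sin (β / 2) := by
      rw [hhalf, Real.sin_add_pi]
    have hc : Real.cos (α / 2) = -Real.cos (β / 2) := by
      rw [hhalf, Real.cos_add_pi]
    have heq : α * Real.sin (β / 2) = h * π * Real.cos (β / 2) := by
      rw [hs, hc] at h3; linarith
    have hcpos : 0 < Real.cos (β / 2) := by
      exact Real.cos_pos_of_mem_Ioo ⟨by linarith, by linarith⟩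
    have htan : Real.tan (β / 2) = h * π / α := by
      rw [Real.tan_eq_sin_div_cos]
      rw [div_eq_div_iff (ne_of_gt hcpos) (ne_of_gt hα)]
      linear_combination heq
    have harc : Real.arctan (h * π / α) = β / 2 := by
      rw [← htan, Real.arctan_tan] <;> linarith
    rw [harc]; ring
  -- t h := h * π / a₂ h
  set t : ℝ → ℝ := fun h => h * π / a₂ h with ht_def
  have htpos : ∀ h : ℝ, 0 < h → 0 < t h := fun h hh => by
    have := hαpos h hh; positivity
  have htle : ∀ h : ℝ, 0 < h → t h ≤ h / 2 := by
    intro h hh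
    have hα := hαpos h hh
    have h1 := (ha h hh).1
    rw [ht_def]
    rw [div_le_div_iff₀ hα two_pos]
    nlinarith
  -- t tends to 0 within Ioi 0
  have ht0 : Tendsto t (nhdsWithin 0 (Set.Ioi 0)) (nhdsWithin 0 (Set.Ioi 0)) := by
    rw [tendsto_nhdsWithin_iff]
    constructor
    · apply tendsto_of_tendsto_of_tendsto_of_le_of_le'
        (tendsto_const_nhds : Tendsto (fun _ : ℝ => (0:ℝ)) _ (nhds 0))
        (show Tendsto (fun h : ℝ => h / 2) (nhdsWithin 0 (Set.Ioi 0)) (nhds 0) by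
          have : Tendsto (fun h : ℝ => h / 2) (nhds (0:ℝ)) (nhds (0 / 2)) :=
            tendsto_id.div_const 2
          simpa using this.mono_left nhdsWithin_le_nhds)
      · filter_upwards [self_mem_nhdsWithin] with h hh using (htpos h hh).le
      · filter_upwards [self_mem_nhdsWithin] with h hh using htle h hh
    · filter_upwards [self_mem_nhdsWithin] with h hh using htpos h hh
  -- a₂ tends to 2π
  have hαlim : Tendsto a₂ (nhdsWithin 0 (Set.Ioi 0)) (nhds (2 * π)) := by
    apply tendsto_of_tendsto_of_tendsto_of_le_of_le'
      (tendsto_const_nhds : Tendsto (fun _ : ℝ => 2 * π) _ (nhds (2 * π)))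
      (show Tendsto (fun h : ℝ => 2 * π + 2 * Real.arctan (h / 2))
          (nhdsWithin 0 (Set.Ioi 0)) (nhds (2 * π)) by
        have hc : Continuous fun h : ℝ => 2 * π + 2 * Real.arctan (h / 2) := by
          continuity
        have := (hc.tendsto 0).mono_left
          (nhdsWithin_le_nhds : nhdsWithin (0:ℝ) (Set.Ioi 0) ≤ nhds 0)
        simpa using this)
    · filter_upwards [self_mem_nhdsWithin] with h hh using (ha h hh).1
    · filter_upwards [self_mem_nhdsWithin] with h hh
      have := key h hh
      have hmono := Real.arctan_strictMono.monotone (htle h hh)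
      linarith
  -- slope of arctan at 0
  have hslope : Tendsto (fun x : ℝ => Real.arctan x / x) (nhdsWithin 0 {0}ᶜ) (nhds 1) := by
    have h1 := Real.hasDerivAt_arctan 0
    rw [hasDerivAt_iff_tendsto_slope] at h1
    have h2 : (fun x : ℝ => Real.arctan x / x) = slope Real.arctan 0 := by
      funext x
      rw [slope_def_field]
      simp
    rw [h2]
    convert h1 using 2
    norm_num
  -- combine
  have hmul : Tendsto (fun h : ℝ => (Real.arctan (t h) / t h) * (2 * π / a₂ h))
      (nhdsWithin 0 (Set.Ioi 0)) (nhds 1) := by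
    have hcomp : Tendsto (fun h : ℝ => Real.arctan (t h) / t h)
        (nhdsWithin 0 (Set.Ioi 0)) (nhds 1) := by
      apply hslope.comp
      exact ht0.mono_right (nhdsWithin_mono _ (fun x hx => ne_of_gt hx))
    have hdiv : Tendsto (fun h : ℝ => 2 * π / a₂ h)
        (nhdsWithin 0 (Set.Ioi 0)) (nhds 1) := by
      have hne : (2:ℝ) * π ≠ 0 := by positivity
      have h2 := (tendsto_const_nhds : Tendsto (fun _ : ℝ => 2 * π)
        (nhdsWithin (0:ℝ) (Set.Ioi 0)) (nhds (2 * π))).div hαlim hne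
      rw [div_self hne] at h2
      exact h2
    simpa using hcomp.mul hdiv
  apply hmul.congr'
  filter_upwards [self_mem_nhdsWithin] with h hh
  have hα := hαpos h hh
  have htne : t h ≠ 0 := ne_of_gt (htpos h hh)
  rw [key h hh, ht_def]
  have hh' : (h:ℝ) ≠ 0 := ne_of_gt hh
  have hαne : a₂ h ≠ 0 := ne_of_gt hα
  have hπne : π ≠ 0 := ne_of_gt hπ
  set A := Real.arctan (h * π / a₂ h) with hA
  field_simp
end

section
/- For h > 0 let a₀(h) be the unique real number with 0 ≤ a₀(h) < π and a₀(h)·sin(a₀(h)/2) = hπ·cos(a₀(h)/2), and let a₂(h) be the unique real number with 2π ≤ a₂(h) < 3π and a₂(h)·sin(a₂(h)/2) = hπ·cos(a₂(h)/2). Define θ(h) = arctan(−cos(a₀(h)/2)/cos(a₂(h)/2)). Then (θ(h) − π/4)/h tends to −π/8 as h tends to 0 from the right; in particular θ(h) < π/4 for all sufficiently small h > 0. -/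
open Real Filter Topology

/-!
Put `c = a₂/2 - π`. The second equation becomes `a₂ sin c = hπ cos c` with `0 ≤ c < π/2`, so
`tan c ≥ c` gives `c ≤ h/2` and `1 + cos (a₂/2) = 1 - cos c = O(h²)`. In the first equation,
`sin (a₀/2) = 2 sin (a₀/4) cos (a₀/4)` and `1 - cos (a₀/2) = 2 sin² (a₀/4)` turn it into
`(1 - cos (a₀/2))/h = π cos (a₀/2) tan (a₀/4) / a₀ → π/4`. Hence
`r = -cos (a₀/2)/cos (a₂/2) = 1 - πh/4 + o(h)`, and since `arctan' 1 = 1/2`,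
`θ = arctan r = π/4 - πh/8 + o(h)`. Moreover `c ≤ h/2 < a₀/2`, so `r < 1` and `θ < π/4`.
-/

theorem Filter.Tendsto.of_div_self {u : ℝ → ℝ} {L : ℝ} {l : Filter ℝ} (hl : l ≤ 𝓝[≠] 0)
    (hu : Tendsto (fun t => u t / t) l (𝓝 L)) : Tendsto u l (𝓝 0) := by
  have hprod := (tendsto_id.mono_left (hl.trans nhdsWithin_le_nhds)).mul hu
  rw [zero_mul] at hprod
  refine hprod.congr' ?_
  filter_upwards [hl self_mem_nhdsWithin] with t ht
  exact mul_div_cancel₀ _ ht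

theorem HasDerivAt.tendsto_comp_sub_div {f g : ℝ → ℝ} {f' x₀ L : ℝ} {l : Filter ℝ}
    (hf : HasDerivAt f f' x₀) (hl : l ≤ 𝓝[≠] 0)
    (hg : Tendsto (fun t => (g t - x₀) / t) l (𝓝 L)) (hne : ∀ᶠ t in l, g t ≠ x₀) :
    Tendsto (fun t => (f (g t) - f x₀) / t) l (𝓝 (f' * L)) := by
  have hg₀ : Tendsto g l (𝓝 x₀) := by
    simpa using (hg.of_div_self hl).const_add x₀
  have hslope := (hasDerivAt_iff_tendsto_slope.mp hf).comp
    (tendsto_nhdsWithin_iff.mpr ⟨hg₀, hne⟩)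
  refine (hslope.mul hg).congr' ?_
  filter_upwards [hne] with t hne
  simp only [Function.comp_apply, slope_def_field]
  rw [div_mul_div_cancel₀ (sub_ne_zero.mpr hne)]

theorem Real.mul_le_of_mul_sin_eq_mul_cos {c k y : ℝ} (hc : 0 ≤ c) (hy₀ : 0 ≤ y)
    (hy : y < π / 2) (heq : c * sin y = k * cos y) : c * y ≤ k := by
  have hcos : 0 < cos y := cos_pos_of_mem_Ioo ⟨by linarith [pi_pos], hy⟩
  have htan : y * cos y ≤ sin y := by
    have := le_tan hy₀ hy
    rwa [tan_eq_sin_div_cos, le_div_iff₀ hcos] at this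
  nlinarith [mul_le_mul_of_nonneg_left htan hc]

section RobinZero

variable {h a : ℝ}

theorem sq_le_of_robin₀ (ha : 0 ≤ a) (haπ : a < π)
    (heq : a * sin (a / 2) = h * π * cos (a / 2)) : a ^ 2 ≤ 2 * π * h := by
  have := mul_le_of_mul_sin_eq_mul_cos ha (by linarith) (by linarith) heq
  nlinarith

theorem lt_of_robin₀ (hh : 0 < h) (hh2 : h < 2) (ha : 0 ≤ a)
    (heq : a * sin (a / 2) = h * π * cos (a / 2)) : h < a := by
  by_contra! hah
  have hsin : sin (a / 2) ≤ a / 2 := sin_le (by linarith)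
  have hcos : 1 / 2 ≤ cos (a / 2) := by
    nlinarith [one_sub_sq_div_two_le_cos (x := a / 2)]
  have hπh : h * π ≤ a ^ 2 := by
    nlinarith [mul_le_mul_of_nonneg_left hsin ha,
      mul_le_mul_of_nonneg_left hcos (by positivity : 0 ≤ h * π)]
  nlinarith [pi_gt_three]

theorem one_sub_cos_div_eq_of_robin₀ (hh : 0 < h) (ha : 0 < a) (haπ : a < π)
    (heq : a * sin (a / 2) = h * π * cos (a / 2)) :
    (1 - cos (a / 2)) / h = π / 4 * (cos (a / 2) * sinc (a / 4) / cos (a / 4)) := by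
  have hcos : 0 < cos (a / 4) := cos_pos_of_mem_Ioo ⟨by linarith [pi_pos], by linarith⟩
  have hsin : sin (a / 2) = 2 * sin (a / 4) * cos (a / 4) := by
    rw [← sin_two_mul]; ring_nf
  have hcos2 : cos (a / 2) = 1 - 2 * sin (a / 4) ^ 2 := by
    rw [← cos_two_mul_eq_one_sub]; ring_nf
  rw [sinc_of_ne_zero (by positivity), hcos2]
  rw [hsin, hcos2] at heq
  field_simp
  linear_combination sin (a / 4) * heq

end RobinZero

section RobinTwo

variable {h b : ℝ}

theorem half_sub_pi_le_of_robin₂ (hb : 2 * π ≤ b) (hb3 : b < 3 * π)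
    (heq : b * sin (b / 2) = h * π * cos (b / 2)) : b / 2 - π ≤ h / 2 := by
  have heq' : b * sin (b / 2 - π) = h * π * cos (b / 2 - π) := by
    rw [sin_sub_pi, cos_sub_pi]; linarith
  have := mul_le_of_mul_sin_eq_mul_cos (by linarith [pi_pos]) (by linarith) (by linarith) heq'
  nlinarith [pi_pos]

theorem one_add_cos_le_of_robin₂ (hb : 2 * π ≤ b) (hb3 : b < 3 * π)
    (heq : b * sin (b / 2) = h * π * cos (b / 2)) : 1 + cos (b / 2) ≤ h ^ 2 / 8 := by
  have hc := half_sub_pi_le_of_robin₂ hb hb3 heq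
  have hcos := one_sub_sq_div_two_le_cos (x := b / 2 - π)
  rw [cos_sub_pi] at hcos
  nlinarith

end RobinTwo

theorem neg_cos_div_cos_lt_one_of_robin {h a b : ℝ} (hh : 0 < h) (hh2 : h < 2)
    (ha : 0 ≤ a) (haπ : a < π) (heqa : a * sin (a / 2) = h * π * cos (a / 2))
    (hb : 2 * π ≤ b) (hb3 : b < 3 * π) (heqb : b * sin (b / 2) = h * π * cos (b / 2)) :
    -cos (a / 2) / cos (b / 2) < 1 := by
  have hc := half_sub_pi_le_of_robin₂ hb hb3 heqb
  have hha := lt_of_robin₀ hh hh2 ha heqa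
  have hcos : 0 < cos (b / 2 - π) := cos_pos_of_mem_Ioo ⟨by linarith [pi_pos], by linarith⟩
  have hlt : cos (a / 2) < cos (b / 2 - π) :=
    cos_lt_cos_of_nonneg_of_le_pi (by linarith) (by linarith) (by linarith)
  have hcosb : cos (b / 2) = -cos (b / 2 - π) := by rw [cos_sub_pi, neg_neg]
  rwa [hcosb, neg_div_neg_eq, div_lt_one hcos]

theorem tendsto_one_sub_cos_div_of_robin₀ {a₀ : ℝ → ℝ}
    (ha0 : ∀ h : ℝ, 0 < h → 0 ≤ a₀ h ∧ a₀ h < π ∧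
      a₀ h * sin (a₀ h / 2) = h * π * cos (a₀ h / 2)) :
    Tendsto (fun h => (1 - cos (a₀ h / 2)) / h) (𝓝[>] 0) (𝓝 (π / 4)) := by
  have ha₀ : Tendsto a₀ (𝓝[>] 0) (𝓝 0) := by
    have hsqrt : Tendsto (fun h => √(2 * π * h)) (𝓝[>] 0) (𝓝 0) := by
      have hcont : Continuous fun h => √(2 * π * h) := by fun_prop
      simpa using (hcont.tendsto 0).mono_left nhdsWithin_le_nhds
    refine squeeze_zero' ?_ ?_ hsqrt
    · filter_upwards [self_mem_nhdsWithin] with h hh using (ha0 h hh).1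
    · filter_upwards [self_mem_nhdsWithin] with h hh
      obtain ⟨ha, haπ, heq⟩ := ha0 h hh
      exact le_sqrt_of_sq_le (sq_le_of_robin₀ ha haπ heq)
  have hF : ContinuousAt (fun x => π / 4 * (cos (x / 2) * sinc (x / 4) / cos (x / 4))) 0 := by
    have : cos (0 / 4 : ℝ) ≠ 0 := by simp
    fun_prop (disch := exact this)
  have hlim := hF.tendsto.comp ha₀
  simp only [zero_div, cos_zero, sinc_zero, mul_one, div_one] at hlim
  refine hlim.congr' ?_
  filter_upwards [Ioo_mem_nhdsGT (show (0 : ℝ) < 2 by norm_num)] with h ⟨hh, hh2⟩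
  obtain ⟨ha, haπ, heq⟩ := ha0 h hh
  exact (one_sub_cos_div_eq_of_robin₀ hh (hh.trans (lt_of_robin₀ hh hh2 ha heq))
    haπ heq).symm

theorem tendsto_one_add_cos_div_of_robin₂ {a₂ : ℝ → ℝ}
    (ha2 : ∀ h : ℝ, 0 < h → 2 * π ≤ a₂ h ∧ a₂ h < 3 * π ∧
      a₂ h * sin (a₂ h / 2) = h * π * cos (a₂ h / 2)) :
    Tendsto (fun h => (1 + cos (a₂ h / 2)) / h) (𝓝[>] 0) (𝓝 0) := by
  have hlin : Tendsto (fun h : ℝ => h / 8) (𝓝[>] 0) (𝓝 0) := by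
    simpa using ((continuous_id.div_const (8 : ℝ)).tendsto 0).mono_left nhdsWithin_le_nhds
  refine squeeze_zero' ?_ ?_ hlin
  · filter_upwards [self_mem_nhdsWithin] with h hh
    exact div_nonneg (by linarith [neg_one_le_cos (a₂ h / 2)]) (le_of_lt hh)
  · filter_upwards [self_mem_nhdsWithin] with h hh
    obtain ⟨hb, hb3, heq⟩ := ha2 h hh
    rw [div_le_iff₀ hh]
    nlinarith [one_add_cos_le_of_robin₂ hb hb3 heq]

theorem tendsto_neg_div_sub_one_div {A B : ℝ → ℝ} {α β : ℝ} {l : Filter ℝ}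
    (hl : l ≤ 𝓝[≠] 0) (hA : Tendsto (fun t => (1 - A t) / t) l (𝓝 α))
    (hB : Tendsto (fun t => (1 + B t) / t) l (𝓝 β)) :
    Tendsto (fun t => (-A t / B t - 1) / t) l (𝓝 (β - α)) := by
  have hB₀ : Tendsto B l (𝓝 (-1)) := by simpa using (hB.of_div_self hl).sub_const 1
  have hlim := (hA.sub hB).div hB₀ (by norm_num)
  rw [show (α - β) / -1 = β - α by ring] at hlim
  refine hlim.congr' ?_
  filter_upwards [hl self_mem_nhdsWithin, hB₀.eventually_ne (by norm_num : (-1 : ℝ) ≠ 0)]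
    with t ht hBt
  simp only [Pi.div_apply]
  field_simp
  ring

theorem stmt_19 (a₀ a₂ : ℝ → ℝ)
    (ha0 : ∀ h : ℝ, 0 < h → 0 ≤ a₀ h ∧ a₀ h < π ∧
      a₀ h * Real.sin (a₀ h / 2) = h * π * Real.cos (a₀ h / 2))
    (ha2 : ∀ h : ℝ, 0 < h → 2 * π ≤ a₂ h ∧ a₂ h < 3 * π ∧
      a₂ h * Real.sin (a₂ h / 2) = h * π * Real.cos (a₂ h / 2))
    (θ : ℝ → ℝ)
    (hθ : ∀ h : ℝ, θ h = Real.arctan (-(Real.cos (a₀ h / 2)) / Real.cos (a₂ h / 2))) :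
    Filter.Tendsto (fun h : ℝ => (θ h - π / 4) / h)
      (nhdsWithin 0 (Set.Ioi 0)) (nhds (-(π / 8))) ∧
    ∃ h₀ > (0 : ℝ), ∀ h : ℝ, 0 < h → h ≤ h₀ → θ h < π / 4 := by
  obtain rfl : θ = _ := funext hθ
  have hlt : ∀ h, 0 < h → h < 2 → -cos (a₀ h / 2) / cos (a₂ h / 2) < 1 := fun h hh hh2 =>
    neg_cos_div_cos_lt_one_of_robin hh hh2 (ha0 h hh).1 (ha0 h hh).2.1 (ha0 h hh).2.2
      (ha2 h hh).1 (ha2 h hh).2.1 (ha2 h hh).2.2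
  have hratio := tendsto_neg_div_sub_one_div (nhdsGT_le_nhdsNE 0)
    (tendsto_one_sub_cos_div_of_robin₀ ha0) (tendsto_one_add_cos_div_of_robin₂ ha2)
  have hne : ∀ᶠ h in 𝓝[>] 0, -cos (a₀ h / 2) / cos (a₂ h / 2) ≠ 1 := by
    filter_upwards [Ioo_mem_nhdsGT (show (0 : ℝ) < 2 by norm_num)] with h hh
    exact (hlt h hh.1 hh.2).ne
  have harctan := (hasDerivAt_arctan 1).tendsto_comp_sub_div (nhdsGT_le_nhdsNE 0) hratio hne
  refine ⟨?_, 1, one_pos, fun h hh hh1 => ?_⟩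
  · rw [arctan_one] at harctan
    convert harctan using 2
    ring
  · rw [← arctan_one]
    exact arctan_strictMono (hlt h hh (by linarith))
end
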